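/- arXiv:1405.3626 — 5 statements merged into one kernel-verified Lean document; each statement's English description precedes it below -/
import Mathlib

section
/- Let N be a positive integer that cannot be written as a^2 + b^2 with a, b nonnegative integers. Then the number of (3,1)-singular overpartitions of N satisfies C̄_{3,1}(N) ≡ 0 (mod 3). -/
/-!
Modulo 3 we have `(q³;q³)_∞ ≡ (q;q)_∞³` and `(-q³;q³)_∞ ≡ (-q;q)_∞³`, while
`∏ (1 + q^(3n-2)) (1 + q^(3n-1)) = (-q;q)_∞ / (-q³;q³)_∞`. Hence the generating function of `C̄₃₁`
is congruent to `((q;q)_∞ / (-q;q)_∞)²`. Since `(q;q)_∞ / (-q;q)_∞ = (q;q²)_∞² (q²;q²)_∞`, Gauss's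
identity, the case `z = -1` of Jacobi's triple product, turns this into
`(∑_{j ∈ ℤ} (-1)^j q^(j²))²`, whose coefficient of `q^N` vanishes unless `N` is a sum of two squares.

All products are finite and all identities are congruences modulo `x^(N+1)`; the triple product is
proved in its finite form, with Gaussian binomials `[2M, M + j]_{q²}`, which agree with
`1 / (q²;q²)_∞` modulo `q^(2(M - |j| + 1))`.
-/

open Finset

section GaussianBinomial

variable {R : Type*} [CommRing R] (x : R)

def gaussBinom : ℕ → ℕ → R
  | _, 0 => 1
  | 0, _ + 1 => 0
  | n + 1, k + 1 => gaussBinom n (k + 1) * x ^ (k + 1) + gaussBinom n k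

def qPochhammer (m : ℕ) : R := ∏ k ∈ range m, (1 - x ^ (k + 1))

@[simp] theorem gaussBinom_zero_right (n : ℕ) : gaussBinom x n 0 = 1 := by cases n <;> rfl

@[simp] theorem gaussBinom_zero_succ (k : ℕ) : gaussBinom x 0 (k + 1) = 0 := rfl

theorem gaussBinom_succ_succ (n k : ℕ) :
    gaussBinom x (n + 1) (k + 1) = gaussBinom x n (k + 1) * x ^ (k + 1) + gaussBinom x n k :=
  rfl

theorem gaussBinom_eq_zero_of_lt {n k : ℕ} (h : n < k) : gaussBinom x n k = 0 := by
  induction n generalizing k with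
  | zero => obtain ⟨k, rfl⟩ := Nat.exists_eq_add_one_of_ne_zero h.ne'; rfl
  | succ n ih =>
    obtain ⟨k, rfl⟩ := Nat.exists_eq_add_one_of_ne_zero (by omega : k ≠ 0)
    rw [gaussBinom_succ_succ, ih (by omega), ih (by omega), zero_mul, zero_add]

@[simp] theorem gaussBinom_self (n : ℕ) : gaussBinom x n n = 1 := by
  induction n with
  | zero => rfl
  | succ n ih => rw [gaussBinom_succ_succ, gaussBinom_eq_zero_of_lt x n.lt_succ_self, ih]; ring

theorem gaussBinom_one (n : ℕ) : gaussBinom x n 1 = ∑ i ∈ range n, x ^ i := by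
  induction n with
  | zero => rfl
  | succ n ih => rw [gaussBinom_succ_succ, ih, geom_sum_succ]; simp [mul_comm]

theorem gaussBinom_succ_succ' (n k : ℕ) :
    gaussBinom x (n + 1) (k + 1) = gaussBinom x n (k + 1) + x ^ (n - k) * gaussBinom x n k := by
  induction n generalizing k with
  | zero => cases k <;> simp [gaussBinom_succ_succ]
  | succ n ih =>
    cases k with
    | zero => simp [gaussBinom_one, sum_range_succ _ (n + 1)]
    | succ k =>
      have hshift : x ^ (n - (k + 1)) * x ^ (k + 2) * gaussBinom x n (k + 1) =
          x ^ (n - k) * x ^ (k + 1) * gaussBinom x n (k + 1) := by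
        rcases le_or_gt (k + 1) n with hkn | hkn
        · rw [← pow_add, ← pow_add, show n - (k + 1) + (k + 2) = n - k + (k + 1) by omega]
        · rw [gaussBinom_eq_zero_of_lt x hkn, mul_zero, mul_zero]
      conv_lhs => rw [gaussBinom_succ_succ x (n + 1), ih, ih]
      rw [gaussBinom_succ_succ x n (k + 1), gaussBinom_succ_succ x n k,
        show n + 1 - (k + 1) = n - k by omega]
      linear_combination hshift

theorem qPochhammer_succ (m : ℕ) :
    qPochhammer x (m + 1) = qPochhammer x m * (1 - x ^ (m + 1)) :=
  prod_range_succ _ _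

theorem gaussBinom_add_mul_qPochhammer (k l : ℕ) :
    gaussBinom x (k + l) k * qPochhammer x k * qPochhammer x l = qPochhammer x (k + l) := by
  obtain ⟨n, hn⟩ : ∃ n, k + l = n := ⟨_, rfl⟩
  induction n generalizing k l with
  | zero =>
    obtain ⟨rfl, rfl⟩ : k = 0 ∧ l = 0 := by omega
    simp [qPochhammer]
  | succ n ih =>
    rcases k with _ | k
    · simp [qPochhammer]
    rcases l with _ | l
    · simp [qPochhammer]
    have h₁ := ih (k + 1) l (by omega)
    have h₂ := ih k (l + 1) (by omega)
    rw [show k + 1 + l = k + l + 1 by ring] at h₁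
    rw [show k + (l + 1) = k + l + 1 by ring] at h₂
    rw [show k + 1 + (l + 1) = k + l + 1 + 1 by ring, gaussBinom_succ_succ, qPochhammer_succ x k,
      qPochhammer_succ x l, qPochhammer_succ x (k + l + 1)]
    rw [qPochhammer_succ x k] at h₁
    rw [qPochhammer_succ x l] at h₂
    linear_combination (1 - x ^ (k + 1)) * h₂ + x ^ (k + 1) * (1 - x ^ (l + 1)) * h₁

end GaussianBinomial

theorem Nat.cast_dist_sq (i b : ℕ) : ((Nat.dist i b : ℤ)) ^ 2 = ((i : ℤ) - b) ^ 2 := by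
  rcases le_total i b with h | h
  · rw [Nat.dist_eq_sub_of_le h, Nat.cast_sub h]; ring
  · rw [Nat.dist_eq_sub_of_le_right h, Nat.cast_sub h]

section JacobiTripleProduct

open Polynomial

variable {R : Type*} [CommRing R] (q : R)

theorem coeff_mul_one_add_C_mul_X_zero (p : R[X]) (c : R) :
    (p * (1 + C c * X)).coeff 0 = p.coeff 0 := by
  rw [mul_add, mul_one, coeff_add, ← mul_assoc, coeff_mul_X_zero, add_zero]

theorem coeff_mul_X_add_C_zero (p : R[X]) (c : R) :
    (p * (X + C c)).coeff 0 = c * p.coeff 0 := by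
  rw [mul_add, coeff_add, coeff_mul_X_zero, coeff_mul_C, zero_add, mul_comm]

theorem coeff_mul_one_add_C_mul_X_succ (p : R[X]) (c : R) (i : ℕ) :
    (p * (1 + C c * X)).coeff (i + 1) = p.coeff (i + 1) + c * p.coeff i := by
  rw [mul_add, mul_one, coeff_add, ← mul_assoc, coeff_mul_X, coeff_mul_C, mul_comm]

theorem coeff_mul_X_add_C_succ (p : R[X]) (c : R) (i : ℕ) :
    (p * (X + C c)).coeff (i + 1) = p.coeff i + c * p.coeff (i + 1) := by
  rw [mul_add, coeff_add, coeff_mul_X, coeff_mul_C, mul_comm]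

/-- Finite form of Jacobi's triple product identity. -/
theorem coeff_prod_mul_prod_eq_gaussBinom (a b i : ℕ) :
    ((∏ k ∈ range a, (1 + C (q ^ (2 * k + 1)) * X)) *
      ∏ k ∈ range b, (X + C (q ^ (2 * k + 1)))).coeff i =
      q ^ Nat.dist i b ^ 2 * gaussBinom (q ^ 2) (a + b) i := by
  induction b generalizing i with
  | zero =>
    rw [prod_range_zero, mul_one, add_zero]
    induction a generalizing i with
    | zero => cases i <;> simp [coeff_one]
    | succ a ih =>
      rw [prod_range_succ]
      cases i with
      | zero => rw [coeff_mul_one_add_C_mul_X_zero, ih]; simp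
      | succ i =>
        rw [coeff_mul_one_add_C_mul_X_succ, ih, ih, gaussBinom_succ_succ', Nat.dist_zero_right,
          Nat.dist_zero_right]
        rcases le_or_gt i a with hia | hia
        · have hexp : (q ^ 2) ^ (a - i) * q ^ (i + 1) ^ 2 = q ^ (2 * a + 1) * q ^ i ^ 2 := by
            rw [← pow_mul, ← pow_add, ← pow_add]
            congr 1
            zify [hia]
            ring
          linear_combination -gaussBinom (q ^ 2) a i * hexp
        · rw [gaussBinom_eq_zero_of_lt _ hia]
          ring
  | succ b ih =>
    rw [prod_range_succ, ← mul_assoc, show a + (b + 1) = a + b + 1 by ring]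
    cases i with
    | zero =>
      rw [coeff_mul_X_add_C_zero, ih]
      simp only [Nat.dist_zero_left, gaussBinom_zero_right, mul_one, ← pow_add]
      congr 1
      ring
    | succ i =>
      rw [coeff_mul_X_add_C_succ, ih, ih, gaussBinom_succ_succ, Nat.dist_add_add_right]
      have hexp : q ^ Nat.dist i b ^ 2 * (q ^ 2) ^ (i + 1) =
          q ^ (2 * b + 1) * q ^ Nat.dist (i + 1) b ^ 2 := by
        rw [← pow_mul, ← pow_add, ← pow_add]
        congr 1
        zify
        rw [Nat.cast_dist_sq, Nat.cast_dist_sq]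
        push_cast
        ring
      linear_combination -gaussBinom (q ^ 2) (a + b) (i + 1) * hexp

def oddQPochhammer (m : ℕ) : R := ∏ k ∈ range m, (1 - q ^ (2 * k + 1))

/-- Gauss's identity, from the triple product at `z = -1`. -/
theorem oddQPochhammer_sq (M : ℕ) :
    oddQPochhammer q M ^ 2 = ∑ i ∈ range (2 * M + 1),
      (-1) ^ (M + i) * q ^ Nat.dist i M ^ 2 * gaussBinom (q ^ 2) (2 * M) i := by
  set p : R[X] := (∏ k ∈ range M, (1 + C (q ^ (2 * k + 1)) * X)) *
    ∏ k ∈ range M, (X + C (q ^ (2 * k + 1)))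
  have hcoeff (i : ℕ) : p.coeff i = q ^ Nat.dist i M ^ 2 * gaussBinom (q ^ 2) (2 * M) i := by
    rw [coeff_prod_mul_prod_eq_gaussBinom, two_mul]
  have hdeg : p.natDegree < 2 * M + 1 :=
    Nat.lt_succ_of_le <| natDegree_le_iff_coeff_eq_zero.2 fun i hi => by
      rw [hcoeff, gaussBinom_eq_zero_of_lt _ hi, mul_zero]
  have heval : p.eval (-1) = (-1) ^ M * oddQPochhammer q M ^ 2 := by
    have hsign : ∏ k ∈ range M, (-1 + q ^ (2 * k + 1)) = (-1) ^ M * oddQPochhammer q M := by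
      rw [oddQPochhammer, ← card_range M, ← prod_const, card_range, ← prod_mul_distrib]
      exact prod_congr rfl fun k _ => by ring
    have hplus : ∏ k ∈ range M, (1 + q ^ (2 * k + 1) * -1) = oddQPochhammer q M :=
      prod_congr rfl fun k _ => by ring
    simp only [p, eval_mul, eval_prod, eval_add, eval_one, eval_C, eval_X, hsign, hplus]
    ring
  calc oddQPochhammer q M ^ 2 = (-1) ^ M * p.eval (-1) := by
        rw [heval, ← mul_assoc, ← pow_add, Even.neg_one_pow ⟨M, rfl⟩, one_mul]
    _ = _ := by
        rw [eval_eq_sum_range' hdeg, mul_sum]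
        exact sum_congr rfl fun i _ => by rw [hcoeff, pow_add]; ring

end JacobiTripleProduct

section ProductIdentities

variable {R : Type*} [CommRing R] (q : R)

theorem prod_range_mul_eq_prod_prod_range {M : Type*} [CommMonoid M] (g : ℕ → M) (c m : ℕ) :
    ∏ k ∈ range (c * m), g k = ∏ j ∈ range m, ∏ r ∈ range c, g (c * j + r) := by
  induction m with
  | zero => simp
  | succ m ih => rw [mul_add, mul_one, prod_range_add, ih, prod_range_succ]

def negQPochhammer (m : ℕ) : R := ∏ k ∈ range m, (1 + q ^ (k + 1))

def c31Numerator (m : ℕ) : R :=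
  ∏ k ∈ range m, ((1 - q ^ (3 * (k + 1))) * (1 + q ^ (3 * k + 1)) * (1 + q ^ (3 * k + 2)))

theorem qPochhammer_two_mul (M : ℕ) :
    qPochhammer q (2 * M) = oddQPochhammer q M * qPochhammer (q ^ 2) M := by
  rw [qPochhammer, prod_range_mul_eq_prod_prod_range, oddQPochhammer, qPochhammer,
    ← prod_mul_distrib]
  refine prod_congr rfl fun k _ => ?_
  simp only [prod_range_succ, prod_range_zero]
  ring

theorem qPochhammer_mul_negQPochhammer (m : ℕ) :
    qPochhammer q m * negQPochhammer q m = qPochhammer (q ^ 2) m := by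
  rw [qPochhammer, negQPochhammer, qPochhammer, ← prod_mul_distrib]
  exact prod_congr rfl fun k _ => by ring

/-- In characteristic `3`, `(1 ± q^k)^3 = 1 ± q^(3k)`. -/
theorem c31Numerator_mul_negQPochhammer_pow_three [CharP R 3] (m : ℕ) :
    c31Numerator q m * negQPochhammer q m ^ 3 =
      qPochhammer q m ^ 3 * negQPochhammer q (3 * m) := by
  rw [c31Numerator, negQPochhammer, negQPochhammer, qPochhammer,
    prod_range_mul_eq_prod_prod_range, ← prod_pow, ← prod_pow, ← prod_mul_distrib,
    ← prod_mul_distrib]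
  refine prod_congr rfl fun k _ => ?_
  simp only [prod_range_succ, prod_range_zero, add_pow_char, sub_pow_char, one_pow, ← pow_mul]
  ring

end ProductIdentities

section Congruences

variable {R : Type*} [CommRing R] (x : R)

theorem mk_prod_range_eq_of_pow_dvd {g : ℕ → R} (hg : ∀ j, x ^ (j + 1) ∣ g j - 1)
    {k m m' : ℕ} (hm : k ≤ m) (hm' : k ≤ m') :
    Ideal.Quotient.mk (Ideal.span {x ^ (k + 1)}) (∏ j ∈ range m, g j) =
      Ideal.Quotient.mk (Ideal.span {x ^ (k + 1)}) (∏ j ∈ range m', g j) := by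
  have hstable {b : ℕ} (hb : k ≤ b) : Ideal.Quotient.mk (Ideal.span {x ^ (k + 1)})
      (∏ j ∈ range b, g j) = Ideal.Quotient.mk (Ideal.span {x ^ (k + 1)}) (∏ j ∈ range k, g j) := by
    have hone : ∀ j ∈ Ico k b, Ideal.Quotient.mk (Ideal.span {x ^ (k + 1)}) (g j) = 1 := by
      intro j hj
      rw [← map_one (Ideal.Quotient.mk _), Ideal.Quotient.eq, Ideal.mem_span_singleton]
      exact (pow_dvd_pow x (by simp at hj; omega)).trans (hg j)
    rw [← prod_range_mul_prod_Ico g hb, map_mul, map_prod _ _ (Ico k b), prod_eq_one hone, mul_one]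
  rw [hstable hm, hstable hm']

variable {x}

theorem mk_qPochhammer_eq {k m m' : ℕ} (hm : k ≤ m) (hm' : k ≤ m') :
    Ideal.Quotient.mk (Ideal.span {x ^ (k + 1)}) (qPochhammer x m) =
      Ideal.Quotient.mk (Ideal.span {x ^ (k + 1)}) (qPochhammer x m') :=
  mk_prod_range_eq_of_pow_dvd x (fun j => ⟨-1, by ring⟩) hm hm'

theorem mk_qPochhammer_sq_eq {k m m' : ℕ} (hm : k ≤ m) (hm' : k ≤ m') :
    Ideal.Quotient.mk (Ideal.span {x ^ (k + 1)}) (qPochhammer (x ^ 2) m) =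
      Ideal.Quotient.mk (Ideal.span {x ^ (k + 1)}) (qPochhammer (x ^ 2) m') :=
  mk_prod_range_eq_of_pow_dvd x (fun j => ⟨-x ^ (j + 1), by ring⟩) hm hm'

theorem mk_negQPochhammer_eq {k m m' : ℕ} (hm : k ≤ m) (hm' : k ≤ m') :
    Ideal.Quotient.mk (Ideal.span {x ^ (k + 1)}) (negQPochhammer x m) =
      Ideal.Quotient.mk (Ideal.span {x ^ (k + 1)}) (negQPochhammer x m') :=
  mk_prod_range_eq_of_pow_dvd x (fun j => ⟨1, by ring⟩) hm hm'

theorem mk_c31Numerator_eq {k m m' : ℕ} (hm : k ≤ m) (hm' : k ≤ m') :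
    Ideal.Quotient.mk (Ideal.span {x ^ (k + 1)}) (c31Numerator x m) =
      Ideal.Quotient.mk (Ideal.span {x ^ (k + 1)}) (c31Numerator x m') :=
  mk_prod_range_eq_of_pow_dvd x (fun j => ⟨x ^ (2 * j) * (1 + x ^ (3 * j + 2)) + x ^ (2 * j + 1)
    - x ^ (2 * j + 2) * (1 + x ^ (3 * j + 1)) * (1 + x ^ (3 * j + 2)), by ring⟩) hm hm'

theorem isNilpotent_mk_span_pow (k : ℕ) :
    IsNilpotent (Ideal.Quotient.mk (Ideal.span {x ^ k}) x) :=
  ⟨k, by rw [← map_pow, Ideal.Quotient.eq_zero_iff_mem, Ideal.mem_span_singleton]⟩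

theorem isUnit_mk_qPochhammer (k m : ℕ) :
    IsUnit (Ideal.Quotient.mk (Ideal.span {x ^ k}) (qPochhammer x m)) := by
  rw [qPochhammer, map_prod, IsUnit.prod_iff]
  intro j _
  rw [map_sub, map_one, map_pow]
  exact ((isNilpotent_mk_span_pow k).pow_succ j).isUnit_one_sub

theorem isUnit_mk_negQPochhammer (k m : ℕ) :
    IsUnit (Ideal.Quotient.mk (Ideal.span {x ^ k}) (negQPochhammer x m)) := by
  rw [negQPochhammer, map_prod, IsUnit.prod_iff]
  intro j _
  rw [map_add, map_one, map_pow]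
  exact ((isNilpotent_mk_span_pow k).pow_succ j).isUnit_one_add

variable (x) in
/-- Modulo `x ^ (j + 1)`, the Gaussian binomial `[n, i]_x` is the inverse of `(x; x)_∞` as soon
as `j ≤ min i (n - i)`. -/
theorem pow_succ_dvd_gaussBinom_mul_qPochhammer_sub_one {n i m j : ℕ} (hi : i ≤ n)
    (hji : j ≤ i) (hjn : j ≤ n - i) (hjm : j ≤ m) :
    x ^ (j + 1) ∣ gaussBinom x n i * qPochhammer x m - 1 := by
  set π := Ideal.Quotient.mk (Ideal.span {x ^ (j + 1)})
  suffices π (gaussBinom x n i * qPochhammer x m) = 1 by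
    rwa [← map_one π, Ideal.Quotient.eq, Ideal.mem_span_singleton] at this
  have hprod := congrArg π (gaussBinom_add_mul_qPochhammer x i (n - i))
  rw [Nat.add_sub_cancel' hi, map_mul, map_mul, mk_qPochhammer_eq hji le_rfl,
    mk_qPochhammer_eq hjn le_rfl, mk_qPochhammer_eq (hji.trans hi) le_rfl] at hprod
  rw [map_mul, mk_qPochhammer_eq hjm le_rfl]
  exact (isUnit_mk_qPochhammer _ j).mul_right_cancel (by rw [hprod, one_mul])

variable (x) in
/-- `∑_{|j| ≤ M} (-1)^j x^(j²)`, indexed by `i = M + j`. -/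
def thetaTrunc (M : ℕ) : R :=
  ∑ i ∈ range (2 * M + 1), (-1) ^ (M + i) * x ^ Nat.dist i M ^ 2

theorem mk_thetaTrunc {N M : ℕ} (h : N ≤ 2 * M) :
    Ideal.Quotient.mk (Ideal.span {x ^ (N + 1)}) (thetaTrunc x M) =
      Ideal.Quotient.mk (Ideal.span {x ^ (N + 1)})
        (oddQPochhammer x M ^ 2 * qPochhammer (x ^ 2) M) := by
  rw [oddQPochhammer_sq, sum_mul, thetaTrunc, map_sum, map_sum]
  refine sum_congr rfl fun i hi => ?_
  have hi : i ≤ 2 * M := Nat.lt_succ_iff.1 (mem_range.1 hi)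
  have hd : Nat.dist i M ≤ M := by unfold Nat.dist; omega
  have hB := pow_succ_dvd_gaussBinom_mul_qPochhammer_sub_one (x ^ 2) (m := M)
    (j := M - Nat.dist i M) hi (by unfold Nat.dist; omega) (by unfold Nat.dist; omega) (by omega)
  -- with `d = dist i M`: `d² + 2(M - d + 1) ≥ 2M + 1` because `(d - 1)² ≥ 0`
  have hexp : N + 1 ≤ Nat.dist i M ^ 2 + 2 * (M - Nat.dist i M + 1) := by
    zify [hd]
    nlinarith [sq_nonneg ((Nat.dist i M : ℤ) - 1)]
  rw [Ideal.Quotient.eq, Ideal.mem_span_singleton]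
  calc x ^ (N + 1) ∣ x ^ Nat.dist i M ^ 2 * (x ^ 2) ^ (M - Nat.dist i M + 1) := by
        rw [← pow_mul, ← pow_add]
        exact pow_dvd_pow x hexp
    _ ∣ _ := by
        refine Dvd.dvd.mul_left (mul_dvd_mul_left _ hB) (-(-1) ^ (M + i)) |>.trans ⟨1, ?_⟩
        ring

theorem mk_thetaTrunc_mul_negQPochhammer {N M : ℕ} (hM : N ≤ M) :
    Ideal.Quotient.mk (Ideal.span {x ^ (N + 1)}) (thetaTrunc x M * negQPochhammer x M) =
      Ideal.Quotient.mk (Ideal.span {x ^ (N + 1)}) (qPochhammer x M) := by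
  have hθ := mk_thetaTrunc (x := x) (N := N) (M := M) (by omega)
  have hW := mk_negQPochhammer_eq (x := x) (m := M) (m' := 2 * M) hM (by omega)
  have hD := mk_qPochhammer_sq_eq (x := x) (m := 2 * M) (m' := M) (by omega) hM
  have hP := mk_qPochhammer_eq (x := x) (m := 2 * M) (m' := M) (by omega) hM
  set π := Ideal.Quotient.mk (Ideal.span {x ^ (N + 1)})
  calc π (thetaTrunc x M * negQPochhammer x M)
      = π (oddQPochhammer x M ^ 2 * qPochhammer (x ^ 2) M * negQPochhammer x (2 * M)) := by
        rw [map_mul, map_mul _ _ (negQPochhammer x _), hθ, hW]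
    _ = π (oddQPochhammer x M * qPochhammer (x ^ 2) (2 * M)) := by
        congr 1
        rw [← qPochhammer_mul_negQPochhammer x (2 * M), qPochhammer_two_mul x M]
        ring
    _ = π (qPochhammer x (2 * M)) := by rw [map_mul, hD, qPochhammer_two_mul, map_mul]
    _ = π (qPochhammer x M) := hP

theorem mk_eq_thetaTrunc_sq [CharP R 3] {A : R} {N : ℕ}
    (hA : Ideal.Quotient.mk (Ideal.span {x ^ (N + 1)}) (A * qPochhammer x (N + 1)) =
      Ideal.Quotient.mk (Ideal.span {x ^ (N + 1)}) (c31Numerator x (N + 1))) :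
    Ideal.Quotient.mk (Ideal.span {x ^ (N + 1)}) A =
      Ideal.Quotient.mk (Ideal.span {x ^ (N + 1)}) (thetaTrunc x (N + 1) ^ 2) := by
  set π := Ideal.Quotient.mk (Ideal.span {x ^ (N + 1)})
  set P := qPochhammer x (N + 1)
  set W := negQPochhammer x (N + 1)
  have hunit : IsUnit (π (P * W ^ 3)) := by
    rw [map_mul, map_pow]
    exact (isUnit_mk_qPochhammer _ _).mul ((isUnit_mk_negQPochhammer _ _).pow 3)
  have hθ : π (thetaTrunc x (N + 1)) * π W = π P := by
    rw [← map_mul]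
    exact mk_thetaTrunc_mul_negQPochhammer (by omega)
  have hW : π (negQPochhammer x (3 * (N + 1))) = π W := mk_negQPochhammer_eq (by omega) (by omega)
  refine hunit.mul_right_cancel ?_
  calc π A * π (P * W ^ 3) = π (c31Numerator x (N + 1) * W ^ 3) := by
        rw [map_mul, map_mul, ← hA, map_mul]
        ring
    _ = π P ^ 3 * π W := by
        rw [c31Numerator_mul_negQPochhammer_pow_three, map_mul, map_pow, hW]
    _ = π (thetaTrunc x (N + 1) ^ 2) * π (P * W ^ 3) := by
        simp only [map_mul, map_pow]
        rw [← hθ]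
        ring

end Congruences

section PowerSeries

open PowerSeries

variable {R : Type*} [CommRing R]

theorem mk_span_X_pow_eq_iff {n : ℕ} {f g : R⟦X⟧} :
    Ideal.Quotient.mk (Ideal.span {X ^ n}) f = Ideal.Quotient.mk (Ideal.span {X ^ n}) g ↔
      ∀ k < n, coeff k f = coeff k g := by
  simp only [Ideal.Quotient.eq, Ideal.mem_span_singleton, X_pow_dvd_iff, map_sub, sub_eq_zero]

theorem mk_mul_qPochhammer_eq_of_coeff {A : R⟦X⟧}
    (hA : ∀ k, coeff k (A * qPochhammer X (k + 1)) = coeff k (c31Numerator X (k + 1))) (N : ℕ) :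
    Ideal.Quotient.mk (Ideal.span {X ^ (N + 1)}) (A * qPochhammer X (N + 1)) =
      Ideal.Quotient.mk (Ideal.span {X ^ (N + 1)}) (c31Numerator X (N + 1)) := by
  refine mk_span_X_pow_eq_iff.2 fun k hk => ?_
  have hP : Ideal.Quotient.mk (Ideal.span {X ^ (k + 1)}) (A * qPochhammer X (N + 1)) =
      Ideal.Quotient.mk (Ideal.span {X ^ (k + 1)}) (A * qPochhammer X (k + 1)) := by
    rw [map_mul, map_mul, mk_qPochhammer_eq (m := N + 1) (m' := k + 1) (by omega) (by omega)]
  have hQ : Ideal.Quotient.mk (Ideal.span {X ^ (k + 1)}) (c31Numerator X (k + 1)) =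
      Ideal.Quotient.mk (Ideal.span {X ^ (k + 1)}) (c31Numerator (X : R⟦X⟧) (N + 1)) :=
    mk_c31Numerator_eq (m := k + 1) (m' := N + 1) (by omega) (by omega)
  rw [mk_span_X_pow_eq_iff.1 hP k k.lt_succ_self, hA, mk_span_X_pow_eq_iff.1 hQ k k.lt_succ_self]

theorem coeff_thetaTrunc_sq_eq_zero {N : ℕ} (h : ¬ ∃ a b : ℕ, N = a ^ 2 + b ^ 2) (M : ℕ) :
    coeff N (thetaTrunc (X : R⟦X⟧) M ^ 2) = 0 := by
  rw [sq, thetaTrunc, sum_mul_sum, map_sum]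
  refine sum_eq_zero fun i _ => ?_
  rw [map_sum]
  refine sum_eq_zero fun j _ => ?_
  rw [show (-1 : R⟦X⟧) ^ (M + i) * X ^ Nat.dist i M ^ 2 * ((-1) ^ (M + j) * X ^ Nat.dist j M ^ 2) =
      C ((-1) ^ (M + i + (M + j))) * X ^ (Nat.dist i M ^ 2 + Nat.dist j M ^ 2) by
    simp only [map_pow, map_neg, map_one]; ring]
  rw [coeff_C_mul_X_pow, if_neg fun hN => h ⟨_, _, hN⟩]

end PowerSeries

open PowerSeries in
theorem C31_not_sum_two_squares_mod_three_general (C : ℕ → ℤ)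
    (hC : ∀ N : ℕ, PowerSeries.coeff (R := ℤ) N
      ((PowerSeries.mk fun n => C n) *
        ∏ n ∈ Finset.range (N + 1), (1 - (PowerSeries.X : PowerSeries ℤ) ^ (n + 1))) =
      PowerSeries.coeff (R := ℤ) N
      (∏ n ∈ Finset.range (N + 1),
        ((1 - (PowerSeries.X : PowerSeries ℤ) ^ (3 * (n + 1))) *
          (1 + PowerSeries.X ^ (3 * n + 1)) * (1 + PowerSeries.X ^ (3 * n + 2)))))
    (N : ℕ) (h : ¬ ∃ a b : ℕ, N = a ^ 2 + b ^ 2) :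
    C N ≡ 0 [ZMOD 3] := by
  have : CharP (ZMod 3)⟦X⟧ 3 := charP_of_injective_ringHom C_injective 3
  set A : (ZMod 3)⟦X⟧ := map (Int.castRingHom (ZMod 3)) (mk fun n => C n)
  have hA (k : ℕ) : coeff k (A * qPochhammer X (k + 1)) = coeff k (c31Numerator X (k + 1)) := by
    have := congrArg (Int.castRingHom (ZMod 3)) (hC k)
    rw [← coeff_map, ← coeff_map, map_mul, map_prod, map_prod] at this
    simpa [A, qPochhammer, c31Numerator] using this
  have hθ := mk_eq_thetaTrunc_sq (mk_mul_qPochhammer_eq_of_coeff hA N)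
  have hcoeff := mk_span_X_pow_eq_iff.1 hθ N N.lt_succ_self
  rw [coeff_thetaTrunc_sq_eq_zero h] at hcoeff
  rw [coeff_map, coeff_mk, Int.coe_castRingHom] at hcoeff
  exact Int.modEq_zero_iff_dvd.2 ((ZMod.intCast_zmod_eq_zero_iff_dvd (C N) 3).1 hcoeff)

/-- If a positive integer `N` is not a sum of two (nonnegative) squares, then
`C̄₃₁(N) ≡ 0 (mod 3)`. -/
theorem C31_not_sum_two_squares_mod_three (C : ℕ → ℤ)
    (hC : ∀ N : ℕ, PowerSeries.coeff (R := ℤ) N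
      ((PowerSeries.mk fun n => C n) *
        ∏ n ∈ Finset.range (N + 1), (1 - (PowerSeries.X : PowerSeries ℤ) ^ (n + 1))) =
      PowerSeries.coeff (R := ℤ) N
      (∏ n ∈ Finset.range (N + 1),
        ((1 - (PowerSeries.X : PowerSeries ℤ) ^ (3 * (n + 1))) *
          (1 + PowerSeries.X ^ (3 * n + 1)) * (1 + PowerSeries.X ^ (3 * n + 2)))))
    (N : ℕ) (hN : 0 < N) (h : ¬ ∃ a b : ℕ, N = a ^ 2 + b ^ 2) :
    C N ≡ 0 [ZMOD 3] :=
  C31_not_sum_two_squares_mod_three_general C hC N h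
end

section
/- For every integer n ≥ 1, C̄_{3,1}(n) ≡ 0 (mod 2). -/
/-!
Modulo 2 we have `1 + qᵏ ≡ 1 - qᵏ`, so the numerator `∏ (1 - q³ⁿ)(1 + q³ⁿ⁻²)(1 + q³ⁿ⁻¹)` becomes
the Euler product `∏ₘ (1 - qᵐ)`, which is the denominator: the generating function is `≡ 1`.
Since partial Euler products have constant term `1`, an identity `g · E ≡ E` holding coefficientwise
up to each degree already forces `g = 1`.
-/

open PowerSeries Finset

theorem Finset.prod_range_three_mul {M : Type*} [CommMonoid M] (f : ℕ → M) (k : ℕ) :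
    ∏ m ∈ range (3 * k), f m = ∏ n ∈ range k, f (3 * n) * f (3 * n + 1) * f (3 * n + 2) := by
  induction k with
  | zero => simp
  | succ k ih =>
    rw [show 3 * (k + 1) = 3 * k + 2 + 1 by ring, prod_range_succ, prod_range_succ, prod_range_succ,
      ih, prod_range_succ, mul_assoc, mul_assoc, mul_assoc]

namespace PowerSeries

variable {R : Type*}

instance [Semiring R] (p : ℕ) [CharP R p] : CharP R⟦X⟧ p :=
  charP_of_injective_ringHom C_injective p

theorem eq_zero_of_forall_coeff_mul_eq_zero [Semiring R] {φ : R⟦X⟧} (ψ : ℕ → R⟦X⟧)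
    (hψ : ∀ N, constantCoeff (ψ N) = 1) (h : ∀ N, coeff N (φ * ψ N) = 0) : φ = 0 := by
  by_contra hφ
  set N := φ.order.toNat
  have hN : coeff N (φ * ψ N) = coeff N φ := by
    rw [← X_pow_order_mul_divXPowOrder (f := φ), mul_assoc, coeff_X_pow_mul', if_pos le_rfl,
      Nat.sub_self, coeff_zero_eq_constantCoeff_apply, map_mul, hψ, mul_one,
      constantCoeff_divXPowOrder, X_pow_order_mul_divXPowOrder]
  exact coeff_order hφ (hN ▸ h N)

noncomputable def partialEuler (R : Type*) [CommRing R] (K : ℕ) : R⟦X⟧ :=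
  ∏ m ∈ range K, (1 - X ^ (m + 1))

variable [CommRing R]

theorem constantCoeff_partialEuler (K : ℕ) : constantCoeff (partialEuler R K) = 1 := by
  simp [partialEuler]

theorem coeff_partialEuler_of_lt [Nontrivial R] {N K L : ℕ} (hNK : N < K) (hKL : K ≤ L) :
    coeff N (partialEuler R L) = coeff N (partialEuler R K) := by
  rw [partialEuler, ← prod_range_mul_prod_Ico _ hKL, coeff_mul_prod_one_sub_of_lt_order]
  · rfl
  · intro m hm
    rw [order_X_pow, Nat.cast_lt]
    have := (mem_Ico.mp hm).1
    omega

theorem partialEuler_three_mul (K : ℕ) : partialEuler R (3 * K) =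
    ∏ n ∈ range K, (1 - X ^ (3 * (n + 1))) * (1 - X ^ (3 * n + 1)) * (1 - X ^ (3 * n + 2)) := by
  rw [partialEuler, prod_range_three_mul]
  refine prod_congr rfl fun n _ => ?_
  ring

end PowerSeries

/-- For every `n ≥ 1`, `C̄₃₁(n) ≡ 0 (mod 2)`. -/
theorem C31_even (C : ℕ → ℤ)
    (hC : ∀ N : ℕ, PowerSeries.coeff (R := ℤ) N
      ((PowerSeries.mk fun n => C n) *
        ∏ n ∈ Finset.range (N + 1), (1 - (PowerSeries.X : PowerSeries ℤ) ^ (n + 1))) =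
      PowerSeries.coeff (R := ℤ) N
      (∏ n ∈ Finset.range (N + 1),
        ((1 - (PowerSeries.X : PowerSeries ℤ) ^ (3 * (n + 1))) *
          (1 + PowerSeries.X ^ (3 * n + 1)) * (1 + PowerSeries.X ^ (3 * n + 2)))))
    (n : ℕ) (hn : 1 ≤ n) :
    C n ≡ 0 [ZMOD 2] := by
  set g : (ZMod 2)⟦X⟧ := PowerSeries.mk fun n => (C n : ZMod 2)
  have hg_map : PowerSeries.map (Int.castRingHom (ZMod 2)) (PowerSeries.mk fun n => C n) = g := by
    ext; simp [g]
  have hg : g = 1 := by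
    rw [← sub_eq_zero]
    refine eq_zero_of_forall_coeff_mul_eq_zero (fun N => partialEuler (ZMod 2) (N + 1))
      (fun N => constantCoeff_partialEuler _) fun N => ?_
    have h := congrArg (Int.castRingHom (ZMod 2)) (hC N)
    simp only [← coeff_map, map_mul, map_prod, map_sub, map_add, map_pow, map_one, map_X, hg_map,
      ← CharTwo.sub_eq_add] at h
    rw [← partialEuler, ← partialEuler_three_mul,
      coeff_partialEuler_of_lt N.lt_add_one (by omega)] at h
    rw [sub_mul, one_mul, map_sub, sub_eq_zero, ← h]
  have hn2 : (C n : ZMod 2) = 0 := by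
    simpa [g, coeff_one, Nat.one_le_iff_ne_zero.mp hn] using congrArg (coeff n) hg
  exact Int.modEq_zero_iff_dvd.mpr ((ZMod.intCast_zmod_eq_zero_iff_dvd _ 2).mp hn2)
end

section
/- For every integer n ≥ 1: if n = k(3k−1) for some integer k, then C̄_{4,1}(n) ≡ 1 (mod 2); otherwise C̄_{4,1}(n) ≡ 0 (mod 2). -/
/-!
Modulo 2 we have `1 + q^m ≡ 1 - q^m` and `(1 - q^m)^2 ≡ 1 - q^(2m)`. Writing `E(q) = ∏ (1 - q^n)`
and `O(q)` for the product of `1 - q^m` over odd `m`, this gives `E(q) = O(q) E(q^2)` and makes the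
generating function `E(q^4) O(q) / E(q) ≡ E(q^2)^2 O(q) / (O(q) E(q^2)) = E(q^2)`. By Euler's
pentagonal number theorem `E(q^2) = ∑ₖ (-1)^k q^(k(3k-1))`, and the exponents `k(3k-1)` are pairwise
distinct. Since the hypothesis only involves finite products, these identities are used modulo
`X^n`, where every factor `1 ± X^m` with `m ≥ n` becomes `1`.
-/

open Finset PowerSeries

theorem exists_int_eq_mul_three_mul_sub_one_iff (n : ℕ) :
    (∃ k : ℤ, (n : ℤ) = k * (3 * k - 1)) ↔ 2 ∣ n ∧ n / 2 ∈ Set.range pentagonal := by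
  constructor
  · rintro ⟨k, hk⟩
    have := two_mul_natCast_pentagonal k
    exact ⟨⟨pentagonal k, by omega⟩, k, by omega⟩
  · rintro ⟨⟨m, rfl⟩, k, hk⟩
    refine ⟨k, ?_⟩
    rw [← two_mul_natCast_pentagonal, hk]
    simp

namespace PowerSeries

variable {R : Type*} [CommRing R]

instance {p : ℕ} [CharP R p] : CharP R⟦X⟧ p :=
  charP_of_injective_algebraMap C_injective p

noncomputable abbrev modXPow (n : ℕ) : R⟦X⟧ →+* R⟦X⟧ ⧸ Ideal.span {(X : R⟦X⟧) ^ n} :=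
  Ideal.Quotient.mk _

section modXPow

variable {n : ℕ}

theorem modXPow_eq_iff {f g : R⟦X⟧} :
    modXPow n f = modXPow n g ↔ ∀ i < n, coeff i f = coeff i g := by
  simp only [Ideal.Quotient.eq, Ideal.mem_span_singleton, X_pow_dvd_iff, map_sub, sub_eq_zero]

theorem modXPow_X_pow {m : ℕ} (h : n ≤ m) : modXPow n (X ^ m : R⟦X⟧) = 0 :=
  Ideal.Quotient.eq_zero_iff_mem.2 (Ideal.mem_span_singleton.2 (pow_dvd_pow X h))

theorem modXPow_prod_of_subset {ι : Type*} [DecidableEq ι] {s t : Finset ι} {f : ι → R⟦X⟧}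
    (hst : s ⊆ t) (hf : ∀ i ∈ t \ s, modXPow n (f i) = 1) :
    modXPow n (∏ i ∈ t, f i) = modXPow n (∏ i ∈ s, f i) := by
  rw [← prod_sdiff hst, map_mul, map_prod, prod_eq_one hf, one_mul]

theorem modXPow_prod_range_of_le {f : ℕ → R⟦X⟧} (hf : ∀ k, n ≤ k → modXPow n (f k) = 1)
    {M M' : ℕ} (h : n ≤ M) (h' : M ≤ M') :
    modXPow n (∏ i ∈ range M', f i) = modXPow n (∏ i ∈ range M, f i) :=
  modXPow_prod_of_subset (range_subset_range.2 h') fun k hk ↦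
    hf k (h.trans (by simpa using (mem_sdiff.1 hk).2))

theorem modXPow_expand {p : ℕ} (hp : p ≠ 0) {f g : R⟦X⟧} (h : modXPow n f = modXPow n g) :
    modXPow n (expand p hp f) = modXPow n (expand p hp g) := by
  rw [modXPow_eq_iff] at h ⊢
  intro i hi
  simp only [coeff_expand]
  split_ifs
  exacts [h _ ((Nat.div_le_self i p).trans_lt hi), rfl]

end modXPow

variable (R) in
noncomputable def eulerPartialProd (M : ℕ) : R⟦X⟧ :=
  ∏ i ∈ range M, (1 - X ^ (i + 1))

variable (R) in
noncomputable def c41PartialProd (M : ℕ) : R⟦X⟧ :=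
  ∏ i ∈ range M, ((1 - X ^ (4 * (i + 1))) * (1 + X ^ (4 * i + 1)) * (1 + X ^ (4 * i + 3)))

variable (R) in
noncomputable def oddPartialProd (M : ℕ) : R⟦X⟧ :=
  ∏ i ∈ range M, ((1 - X ^ (4 * i + 1)) * (1 - X ^ (4 * i + 3)))

theorem map_eulerPartialProd {S : Type*} [CommRing S] (f : R →+* S) (M : ℕ) :
    map f (eulerPartialProd R M) = eulerPartialProd S M := by
  simp [eulerPartialProd]

theorem map_c41PartialProd {S : Type*} [CommRing S] (f : R →+* S) (M : ℕ) :
    map f (c41PartialProd R M) = c41PartialProd S M := by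
  simp [c41PartialProd]

theorem isUnit_eulerPartialProd (M : ℕ) : IsUnit (eulerPartialProd R M) := by
  simp [isUnit_iff_constantCoeff, eulerPartialProd]

theorem modXPow_eulerPartialProd_of_le {n M M' : ℕ} (h : n ≤ M) (h' : M ≤ M') :
    modXPow n (eulerPartialProd R M') = modXPow n (eulerPartialProd R M) :=
  modXPow_prod_range_of_le (fun k hk ↦ by simp [modXPow_X_pow (by omega : n ≤ k + 1)]) h h'

theorem modXPow_c41PartialProd_of_le {n M M' : ℕ} (h : n ≤ M) (h' : M ≤ M') :
    modXPow n (c41PartialProd R M') = modXPow n (c41PartialProd R M) :=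
  modXPow_prod_range_of_le (fun k hk ↦ by
    simp [modXPow_X_pow (by omega : n ≤ 4 * (k + 1)), modXPow_X_pow (by omega : n ≤ 4 * k + 1),
      modXPow_X_pow (by omega : n ≤ 4 * k + 3)]) h h'

theorem modXPow_eulerPartialProd {n M : ℕ} (h : n ≤ M) :
    modXPow n (eulerPartialProd R M) = modXPow n (pentagonalSeries R) := by
  obtain ⟨s, hs⟩ := Filter.eventually_atTop.1 <|
    (Filter.eventually_all_finset (range n)).2 fun i _ ↦ coeff_prod_one_sub_X_pow_eventually_eq R i
  have hsM : modXPow n (∏ i ∈ s ∪ range M, (1 - X ^ (i + 1))) = modXPow n (eulerPartialProd R M) :=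
    modXPow_prod_of_subset subset_union_right fun k hk ↦ by
      have : M ≤ k := by simpa using (mem_sdiff.1 hk).2
      simp [modXPow_X_pow (by omega : n ≤ k + 1)]
  rw [← hsM, modXPow_eq_iff]
  exact fun i hi ↦ hs _ subset_union_left i (mem_range.2 hi)

theorem eulerPartialProd_four_mul (M : ℕ) :
    eulerPartialProd R (4 * M) =
      expand 2 two_ne_zero (eulerPartialProd R (2 * M)) * oddPartialProd R M := by
  induction M with
  | zero => simp [eulerPartialProd, oddPartialProd]
  | succ M ih =>
    simp only [eulerPartialProd, oddPartialProd] at ih ⊢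
    rw [show 4 * (M + 1) = 4 * M + 3 + 1 by ring, show 2 * (M + 1) = 2 * M + 1 + 1 by ring]
    simp only [prod_range_succ, ih, map_mul, map_sub, map_one, map_pow, expand_X]
    ring

theorem modXPow_mul_eulerPartialProd {c : R⟦X⟧}
    (hc : ∀ N, coeff N (c * eulerPartialProd R (N + 1)) = coeff N (c41PartialProd R (N + 1)))
    (L : ℕ) : modXPow L (c * eulerPartialProd R L) = modXPow L (c41PartialProd R L) := by
  refine modXPow_eq_iff.2 fun i hi ↦ ?_
  have hP : modXPow (i + 1) (c * eulerPartialProd R L) =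
      modXPow (i + 1) (c * eulerPartialProd R (i + 1)) := by
    rw [map_mul, map_mul, modXPow_eulerPartialProd_of_le le_rfl hi]
  have hF : modXPow (i + 1) (c41PartialProd R L) = modXPow (i + 1) (c41PartialProd R (i + 1)) :=
    modXPow_c41PartialProd_of_le le_rfl hi
  rw [modXPow_eq_iff.1 hP i (lt_add_one i), hc, modXPow_eq_iff.1 hF i (lt_add_one i)]

section CharTwo

variable [CharP R 2]

theorem eulerPartialProd_sq (M : ℕ) :
    eulerPartialProd R M ^ 2 = expand 2 two_ne_zero (eulerPartialProd R M) := by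
  simp only [eulerPartialProd, ← prod_pow, map_prod, map_sub, map_one, map_pow, expand_X]
  refine prod_congr rfl fun i _ ↦ ?_
  rw [CharTwo.sub_eq_add, CharTwo.sub_eq_add, CharTwo.add_sq, one_pow, ← pow_mul, ← pow_mul,
    mul_comm]

theorem c41PartialProd_eq (M : ℕ) :
    c41PartialProd R M = expand 2 two_ne_zero (eulerPartialProd R M) ^ 2 * oddPartialProd R M := by
  rw [← map_pow, eulerPartialProd_sq]
  simp only [c41PartialProd, oddPartialProd, eulerPartialProd, map_prod, map_sub, map_one, map_pow,
    expand_X, ← prod_mul_distrib]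
  refine prod_congr rfl fun i _ ↦ ?_
  simp only [CharTwo.sub_eq_add, ← pow_mul]
  ring

theorem eq_expand_pentagonalSeries {c : R⟦X⟧}
    (hc : ∀ N, coeff N (c * eulerPartialProd R (N + 1)) = coeff N (c41PartialProd R (N + 1))) :
    c = expand 2 two_ne_zero (pentagonalSeries R) := by
  ext n
  set L := n + 1
  suffices modXPow L c = modXPow L (expand 2 two_ne_zero (pentagonalSeries R)) from
    modXPow_eq_iff.1 this n (lt_add_one n)
  have hE {M : ℕ} (h : L ≤ M) : modXPow L (expand 2 two_ne_zero (eulerPartialProd R M)) =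
      modXPow L (expand 2 two_ne_zero (pentagonalSeries R)) :=
    modXPow_expand _ (modXPow_eulerPartialProd h)
  refine ((isUnit_eulerPartialProd L).map (modXPow L)).mul_right_cancel ?_
  calc modXPow L c * modXPow L (eulerPartialProd R L)
      = modXPow L (expand 2 two_ne_zero (eulerPartialProd R L)) ^ 2 *
          modXPow L (oddPartialProd R L) := by
        rw [← map_mul, modXPow_mul_eulerPartialProd hc, c41PartialProd_eq, map_mul, map_pow]
    _ = modXPow L (expand 2 two_ne_zero (pentagonalSeries R)) *
          modXPow L (eulerPartialProd R (4 * L)) := by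
        rw [eulerPartialProd_four_mul, map_mul, hE le_rfl, hE (by omega)]
        ring
    _ = modXPow L (expand 2 two_ne_zero (pentagonalSeries R)) *
          modXPow L (eulerPartialProd R L) := by
        rw [modXPow_eulerPartialProd_of_le le_rfl (by omega)]

open scoped Classical in
theorem coeff_pentagonalSeries_of_charTwo (m : ℕ) :
    coeff m (pentagonalSeries R) = if m ∈ Set.range pentagonal then 1 else 0 := by
  split_ifs with h
  · obtain ⟨k, rfl⟩ := h
    rcases Int.units_eq_one_or k.negOnePow with h | h <;>
      simp [coeff_pentagonalSeries_pentagonal, h, CharTwo.neg_eq]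
  · exact coeff_pentagonalSeries_eq_zero R h

open scoped Classical in
theorem coeff_expand_two_pentagonalSeries (n : ℕ) :
    coeff n (expand 2 two_ne_zero (pentagonalSeries R)) =
      if ∃ k : ℤ, (n : ℤ) = k * (3 * k - 1) then 1 else 0 := by
  rw [coeff_expand, coeff_pentagonalSeries_of_charTwo, exists_int_eq_mul_three_mul_sub_one_iff]
  by_cases h : 2 ∣ n <;> simp [h]

end CharTwo

end PowerSeries

theorem C41_mod_two_general (C : ℕ → ℤ)
    (hC : ∀ N : ℕ, PowerSeries.coeff N
      ((PowerSeries.mk fun n => C n) *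
        ∏ n ∈ Finset.range (N + 1), (1 - (PowerSeries.X : PowerSeries ℤ) ^ (n + 1))) =
      PowerSeries.coeff N
      (∏ n ∈ Finset.range (N + 1),
        ((1 - (PowerSeries.X : PowerSeries ℤ) ^ (4 * (n + 1))) *
          (1 + PowerSeries.X ^ (4 * n + 1)) * (1 + PowerSeries.X ^ (4 * n + 3)))))
    (n : ℕ) :
    ((∃ k : ℤ, (n : ℤ) = k * (3 * k - 1)) → C n ≡ 1 [ZMOD 2]) ∧
    (¬ (∃ k : ℤ, (n : ℤ) = k * (3 * k - 1)) → C n ≡ 0 [ZMOD 2]) := by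
  set c := map (Int.castRingHom (ZMod 2)) (mk fun n ↦ (C n))
  have hc (N : ℕ) : coeff N (c * eulerPartialProd (ZMod 2) (N + 1)) =
      coeff N (c41PartialProd (ZMod 2) (N + 1)) := by
    rw [← map_eulerPartialProd (Int.castRingHom _), ← map_c41PartialProd (Int.castRingHom _),
      ← map_mul, coeff_map, coeff_map]
    exact congrArg _ (hC N)
  classical
  have hCn : (C n : ZMod 2) = if ∃ k : ℤ, (n : ℤ) = k * (3 * k - 1) then 1 else 0 := by
    rw [← coeff_expand_two_pentagonalSeries, ← eq_expand_pentagonalSeries hc]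
    simp [c]
  refine ⟨fun h ↦ ?_, fun h ↦ ?_⟩ <;>
    simp only [h, if_true, if_false] at hCn <;>
    exact (ZMod.intCast_eq_intCast_iff _ _ 2).1 (by simpa using hCn)

/-- For `n ≥ 1`: `C̄₄₁(n) ≡ 1 (mod 2)` if `n = k(3k - 1)` for some integer `k`, and
`C̄₄₁(n) ≡ 0 (mod 2)` otherwise. -/
theorem C41_mod_two (C : ℕ → ℤ)
    (hC : ∀ N : ℕ, PowerSeries.coeff N
      ((PowerSeries.mk fun n => C n) *
        ∏ n ∈ Finset.range (N + 1), (1 - (PowerSeries.X : PowerSeries ℤ) ^ (n + 1))) =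
      PowerSeries.coeff N
      (∏ n ∈ Finset.range (N + 1),
        ((1 - (PowerSeries.X : PowerSeries ℤ) ^ (4 * (n + 1))) *
          (1 + PowerSeries.X ^ (4 * n + 1)) * (1 + PowerSeries.X ^ (4 * n + 3)))))
    (n : ℕ) (hn : 1 ≤ n) :
    ((∃ k : ℤ, (n : ℤ) = k * (3 * k - 1)) → C n ≡ 1 [ZMOD 2]) ∧
    (¬ (∃ k : ℤ, (n : ℤ) = k * (3 * k - 1)) → C n ≡ 0 [ZMOD 2]) :=
  C41_mod_two_general C hC n
end

section
/- Let n ≥ 1 be an integer. If n cannot be written as k(3k−1)/2 + ℓ(ℓ−1) with k an integer and ℓ a positive integer, or if n cannot be written as ℓ(ℓ−1)/2 + 4·k(3k−1)/2 with k an integer and ℓ a positive integer, then C̄_{6,1}(n) ≡ 0 (mod 3). -/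
/-!
Write `f(q) = ∏ₙ (1 - qⁿ)` and `f_d = f(q^d)`. The generating function of `C̄₆,₁` is `f₂² f₃ f₁₂ / (f₁² f₄ f₆)`,
and since `f_{3d} ≡ f_d³ (mod 3)` it is congruent to `f₁ f₄² / f₂`. Gauss's identity
`ψ(q) = ∑_{ℓ ≥ 0} q^(ℓ(ℓ+1)/2) = f₂² / f₁`, a specialisation of Jacobi's triple product, rewrites
this as `f₁ ψ(q²)`, and together with `f(-q) f₁ f₄ = f₂³` also as `f₄ ψ(-q)`. Expanding `f₁` and
`f₄` by Euler's pentagonal number theorem, the coefficient of `qⁿ` is a sum over the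
representations of `n` as `k(3k-1)/2 + ℓ(ℓ-1)`, respectively as `ℓ(ℓ-1)/2 + 4·k(3k-1)/2`.

Infinite products live in `R⟦X⟧` with the coefficientwise topology. Each product identity is
checked on partial products, regrouped into blocks of consecutive factors that agree blockwise.
Jacobi's triple product is the limit of its finite form with Gaussian binomial coefficients, which
tend `X`-adically to `1 / (Q; Q)_∞`.
-/

open Finset Filter Topology PowerSeries PowerSeries.WithPiTopology

section Products

theorem dvd_mul_sub_one {S : Type*} [CommRing S] {M a b : S} (ha : M ∣ a - 1) (hb : M ∣ b - 1) :
    M ∣ a * b - 1 := by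
  rw [show a * b - 1 = (a - 1) * b + (b - 1) by ring]
  exact dvd_add (ha.mul_right b) hb

theorem dvd_prod_range_sub_prod_range {S : Type*} [CommRing S] {M : S} {g : ℕ → S} {a b : ℕ}
    (hab : a ≤ b) (hg : ∀ j, a ≤ j → j < b → M ∣ g j - 1) :
    M ∣ ∏ j ∈ range b, g j - ∏ j ∈ range a, g j := by
  induction b, hab using Nat.le_induction with
  | base => simp
  | succ b hab ih =>
    rw [show ∏ j ∈ range (b + 1), g j - ∏ j ∈ range a, g j =
        (∏ j ∈ range b, g j - ∏ j ∈ range a, g j) * g b + (∏ j ∈ range a, g j) * (g b - 1) by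
      rw [prod_range_succ]; ring]
    exact dvd_add (dvd_mul_of_dvd_left (ih fun j hj _ ↦ hg j hj (by omega)) _)
      (dvd_mul_of_dvd_right (hg b hab (by omega)) _)

theorem prod_range_mul_eq_prod_range_prod {M : Type*} [CommMonoid M] (g : ℕ → M) (c K : ℕ) :
    ∏ i ∈ range (c * K), g i = ∏ j ∈ range K, ∏ r ∈ range c, g (c * j + r) := by
  induction K with
  | zero => simp
  | succ K ih => rw [Nat.mul_succ, prod_range_add, ih, prod_range_succ]

theorem Multipliable.tendsto_prod_range_blocks {M : Type*} [CommMonoid M] [TopologicalSpace M]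
    {g : ℕ → M} (hg : Multipliable g) {c : ℕ} (hc : c ≠ 0) :
    Tendsto (fun K ↦ ∏ j ∈ range K, ∏ r ∈ range c, g (c * j + r)) atTop (𝓝 (∏' j, g j)) := by
  simp_rw [← prod_range_mul_eq_prod_range_prod]
  exact hg.tendsto_prod_tprod_nat.comp
    (tendsto_atTop_mono (fun K ↦ Nat.le_mul_of_pos_left K (Nat.pos_of_ne_zero hc)) tendsto_id)

theorem sum_antidiagonal_eq_sum_Icc {M : Type*} [AddCommMonoid M] (g : ℤ → M) (m : ℕ) :
    ∑ p ∈ antidiagonal (2 * m), g (m - p.1) = ∑ k ∈ Icc (-(m : ℤ)) m, g k := by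
  refine sum_nbij' (fun p ↦ m - p.1) (fun k ↦ ((m - k).toNat, (m + k).toNat)) ?_ ?_ ?_ ?_
    fun _ _ ↦ rfl <;> intro x hx <;> simp [Prod.ext_iff] at hx ⊢ <;> omega

end Products

section GaussianBinomial

variable {S : Type*} [CommRing S] (Q : S)

/-- `qBinom Q a b` is the Gaussian binomial coefficient `[a + b choose a]` in the variable `Q`. -/
def qBinom : ℕ → ℕ → S
  | 0, _ => 1
  | _ + 1, 0 => 1
  | a + 1, b + 1 => qBinom a (b + 1) + Q ^ (a + 1) * qBinom (a + 1) b

def qPoch (n : ℕ) : S := ∏ j ∈ range n, (1 - Q ^ (j + 1))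

@[simp] theorem qBinom_zero_left (b : ℕ) : qBinom Q 0 b = 1 := by simp [qBinom]

@[simp] theorem qBinom_zero_right (a : ℕ) : qBinom Q a 0 = 1 := by cases a <;> simp [qBinom]

theorem qBinom_succ_succ (a b : ℕ) :
    qBinom Q (a + 1) (b + 1) = qBinom Q a (b + 1) + Q ^ (a + 1) * qBinom Q (a + 1) b := by
  rw [qBinom]

theorem qPoch_succ (n : ℕ) : qPoch Q (n + 1) = qPoch Q n * (1 - Q ^ (n + 1)) :=
  prod_range_succ _ n

theorem qBinom_mul_qPoch_mul_qPoch (a b : ℕ) :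
    qBinom Q a b * qPoch Q a * qPoch Q b = qPoch Q (a + b) := by
  induction a, b using qBinom.induct with
  | case1 b => simp [qPoch]
  | case2 a => simp [qPoch]
  | case3 a b ih₁ ih₂ =>
    rw [qBinom_succ_succ, show a + 1 + (b + 1) = a + (b + 1) + 1 by omega,
      qPoch_succ Q (a + (b + 1)), qPoch_succ Q a, qPoch_succ Q b]
    rw [qPoch_succ] at ih₁
    rw [qPoch_succ, show a + 1 + b = a + (b + 1) by omega] at ih₂
    linear_combination (1 - Q ^ (a + 1)) * ih₁ + Q ^ (a + 1) * (1 - Q ^ (b + 1)) * ih₂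

theorem sum_antidiagonal_succ_qBinom_mul (N : ℕ) (h : ℕ → S) :
    ∑ p ∈ antidiagonal (N + 1), qBinom Q p.1 p.2 * h p.1 =
      ∑ p ∈ antidiagonal N, qBinom Q p.1 p.2 * (h (p.1 + 1) + Q ^ p.1 * h p.1) := by
  rw [Nat.sum_antidiagonal_succ]
  cases N with
  | zero => simp [add_comm]
  | succ M =>
    have e₁ := Nat.sum_antidiagonal_succ' (n := M)
      (f := fun p ↦ qBinom Q (p.1 + 1) p.2 * h (p.1 + 1))
    have e₂ := Nat.sum_antidiagonal_succ' (n := M) (f := fun p ↦ qBinom Q p.1 p.2 * h (p.1 + 1))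
    have e₃ := Nat.sum_antidiagonal_succ (n := M)
      (f := fun p ↦ qBinom Q p.1 p.2 * (Q ^ p.1 * h p.1))
    simp only [mul_add, sum_add_distrib, e₁, e₂, e₃, qBinom_succ_succ, add_mul,
      qBinom_zero_left, qBinom_zero_right, mul_assoc, mul_left_comm (Q ^ _)]
    ring

theorem prod_one_add_mul_pow_eq_sum (b : S) (n : ℕ) :
    ∏ j ∈ range n, (1 + b * Q ^ j) =
      ∑ p ∈ antidiagonal n, qBinom Q p.1 p.2 * (Q ^ p.1.choose 2 * b ^ p.1) := by
  induction n generalizing b with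
  | zero => simp
  | succ n ih =>
    rw [prod_range_succ', sum_antidiagonal_succ_qBinom_mul Q n fun a ↦ Q ^ a.choose 2 * b ^ a]
    simp_rw [pow_succ' Q, ← mul_assoc, ih (b * Q), pow_zero, mul_one, sum_mul]
    refine sum_congr rfl fun p _ ↦ ?_
    rw [Nat.choose_succ_succ', Nat.choose_one_right]
    ring

end GaussianBinomial

section JacobiTripleProduct

def tri (k : ℤ) : ℕ := (k * (k + 1) / 2).toNat

theorem two_mul_tri (k : ℤ) : 2 * (tri k : ℤ) = k * (k + 1) := by
  have h : 0 ≤ k * (k + 1) := by nlinarith [sq_nonneg (2 * k + 1)]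
  rw [tri, Int.toNat_of_nonneg (Int.ediv_nonneg h two_pos.le)]
  exact Int.mul_ediv_cancel' (Int.even_mul_succ_self k).two_dvd

theorem tri_add_one (k : ℤ) : (tri (k + 1) : ℤ) = tri k + k + 1 := by
  have := two_mul_tri (k + 1)
  have := two_mul_tri k
  nlinarith

theorem tri_eq_tri_neg_add (k : ℤ) : (tri k : ℤ) = tri (-k) + k := by
  have := two_mul_tri k
  have := two_mul_tri (-k)
  nlinarith

theorem tri_add_tri_neg (k : ℤ) : (tri k + tri (-k) : ℤ) = k ^ 2 := by
  have := two_mul_tri k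
  have := two_mul_tri (-k)
  nlinarith

theorem tri_neg_natCast (a : ℕ) : tri (-a) = a.choose 2 := by
  induction a with
  | zero => rfl
  | succ a ih =>
    have h := tri_add_one (-(a + 1))
    rw [show -((a : ℤ) + 1) + 1 = -a by ring, ih] at h
    rw [Nat.choose_succ_succ', Nat.choose_one_right]
    push_cast
    omega

variable {S : Type*} [CommRing S]

def jacobiTerm (U V : S) (k : ℤ) : S := U ^ tri k * V ^ tri (-k)

theorem jacobiTerm_neg_natCast (U V : S) (a : ℕ) :
    jacobiTerm U V (-a) = (U * V) ^ a.choose 2 * V ^ a := by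
  have h := tri_eq_tri_neg_add a
  rw [tri_neg_natCast] at h
  rw [jacobiTerm, neg_neg, tri_neg_natCast, show tri a = a.choose 2 + a by omega]
  ring

theorem jacobiTerm_mul (U V : S) (m a : ℕ) :
    jacobiTerm U V (m - a) * (U * (U * V) ^ m) = (U * V) ^ a * jacobiTerm U V (m + 1 - a) := by
  have h₁ := tri_add_one (m - a)
  have h₂ := tri_add_one (-(m + 1 - a))
  rw [show (m : ℤ) - a + 1 = m + 1 - a by ring] at h₁
  rw [show -((m : ℤ) + 1 - a) + 1 = -(m - a) by ring] at h₂
  calc jacobiTerm U V (m - a) * (U * (U * V) ^ m)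
      = U ^ (tri (m - a) + 1 + m) * V ^ (tri (-(m - a)) + m) := by rw [jacobiTerm]; ring
    _ = U ^ (a + tri (m + 1 - a)) * V ^ (a + tri (-(m + 1 - a))) := by congr 2 <;> omega
    _ = (U * V) ^ a * jacobiTerm U V (m + 1 - a) := by rw [jacobiTerm]; ring

theorem prod_mul_prod_eq_sum_jacobiTerm (U V : S) (m n : ℕ) :
    (∏ j ∈ range m, (1 + U * (U * V) ^ j)) * ∏ j ∈ range n, (1 + V * (U * V) ^ j) =
      ∑ p ∈ antidiagonal (m + n), qBinom (U * V) p.1 p.2 * jacobiTerm U V (m - p.1) := by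
  induction m with
  | zero =>
    rw [prod_range_zero, one_mul, zero_add, prod_one_add_mul_pow_eq_sum]
    simp only [Nat.cast_zero, zero_sub, jacobiTerm_neg_natCast]
  | succ m ih =>
    rw [prod_range_succ, mul_right_comm, ih, show m + 1 + n = m + n + 1 by omega,
      sum_antidiagonal_succ_qBinom_mul _ _ fun a ↦ jacobiTerm U V ((m + 1 : ℕ) - a), sum_mul]
    refine sum_congr rfl fun p _ ↦ ?_
    rw [show ((m + 1 : ℕ) : ℤ) - ((p.1 + 1 : ℕ) : ℤ) = m - p.1 by push_cast; ring,
      show ((m + 1 : ℕ) : ℤ) - (p.1 : ℕ) = m + 1 - p.1 by push_cast; ring, ← jacobiTerm_mul]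
    ring

theorem jacobiTerm_pow_three_self (Z : S) (k : ℤ) :
    jacobiTerm (Z ^ 3) Z k = Z ^ (k * (2 * k + 1)).toNat := by
  have hk : 0 ≤ k * (2 * k + 1) := by rcases le_or_gt 0 k with h | h <;> nlinarith
  have h : 2 * (3 * tri k + tri (-k) : ℤ) = 2 * (k * (2 * k + 1)) := by
    linear_combination 3 * two_mul_tri k + two_mul_tri (-k)
  rw [jacobiTerm, ← pow_mul, ← pow_add]
  congr 1
  omega

end JacobiTripleProduct

section XAdic

variable {R : Type*} [CommRing R] {Z : R⟦X⟧}

theorem isUnit_of_X_dvd_sub_one {f : R⟦X⟧} (h : X ∣ f - 1) : IsUnit f := by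
  rw [X_dvd_iff, map_sub, map_one, sub_eq_zero] at h
  exact isUnit_iff_constantCoeff.mpr (h ▸ isUnit_one)

theorem X_pow_dvd_one_sub_pow_sub_one (hZ : X ∣ Z) (n : ℕ) : X ^ n ∣ (1 - Z ^ n) - 1 := by
  simpa using pow_dvd_pow_of_dvd hZ n

theorem X_pow_dvd_one_add_pow_sub_one (hZ : X ∣ Z) (n : ℕ) : X ^ n ∣ (1 + Z ^ n) - 1 := by
  simpa using pow_dvd_pow_of_dvd hZ n

theorem X_pow_dvd_qPoch_sub_qPoch {Q : R⟦X⟧} (hQ : X ∣ Q) {s n : ℕ} (hsn : s ≤ n) :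
    X ^ (s + 1) ∣ qPoch Q n - qPoch Q s :=
  dvd_prod_range_sub_prod_range hsn fun j hj _ ↦
    (pow_dvd_pow X (by omega)).trans (X_pow_dvd_one_sub_pow_sub_one hQ (j + 1))

theorem X_pow_dvd_qBinom_mul_qPoch_sub_one {Q : R⟦X⟧} (hQ : X ∣ Q) {a b m : ℕ}
    (hab : a + b = 2 * m) : X ^ (min a b + 1) ∣ qBinom Q a b * qPoch Q m - 1 := by
  set s := min a b
  have hs : IsUnit (qPoch Q s) := isUnit_of_X_dvd_sub_one <| by
    simpa [qPoch] using X_pow_dvd_qPoch_sub_qPoch hQ (Nat.zero_le s)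
  have key : qPoch Q s * (qBinom Q a b * qPoch Q m - 1) =
      qBinom Q a b * qPoch Q s * (qPoch Q m - qPoch Q s) -
        qBinom Q a b * qPoch Q s * (qPoch Q b - qPoch Q s) -
        qBinom Q a b * qPoch Q b * (qPoch Q a - qPoch Q s) +
        (qPoch Q (a + b) - qPoch Q s) := by
    linear_combination qBinom_mul_qPoch_mul_qPoch Q a b
  rw [← hs.dvd_mul_left, key]
  have h {n : ℕ} (hn : s ≤ n) := X_pow_dvd_qPoch_sub_qPoch hQ hn
  exact dvd_add (dvd_sub (dvd_sub ((h (by omega)).mul_left _) ((h (by omega)).mul_left _))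
    ((h (by omega)).mul_left _)) (h (by omega))

theorem X_pow_natAbs_dvd_jacobiTerm {U V : R⟦X⟧} (hU : X ∣ U) (hV : X ∣ V) (k : ℤ) :
    X ^ k.natAbs ∣ jacobiTerm U V k := by
  have hk : k.natAbs ≤ tri k + tri (-k) := by
    have := Int.natAbs_le_self_sq k
    have := tri_add_tri_neg k
    omega
  have h := mul_dvd_mul (pow_dvd_pow_of_dvd hU (tri k)) (pow_dvd_pow_of_dvd hV (tri (-k)))
  rw [← pow_add] at h
  exact (pow_dvd_pow X hk).trans h

/-- The `j`-th factor of the numerator of `∑ C̄₆,₁(n) Zⁿ`. -/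
noncomputable def numeratorFactor (Z : R⟦X⟧) (j : ℕ) : R⟦X⟧ :=
  (1 - Z ^ (6 * (j + 1))) * (1 + Z ^ (6 * j + 1)) * (1 + Z ^ (6 * j + 5))

theorem X_pow_dvd_numeratorFactor_sub_one (hZ : X ∣ Z) (j : ℕ) :
    X ^ (j + 1) ∣ numeratorFactor Z j - 1 := by
  refine dvd_mul_sub_one (dvd_mul_sub_one ?_ ?_) ?_
  · exact (pow_dvd_pow X (by omega)).trans (X_pow_dvd_one_sub_pow_sub_one hZ _)
  all_goals exact (pow_dvd_pow X (by omega)).trans (X_pow_dvd_one_add_pow_sub_one hZ _)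

end XAdic

section InfiniteProducts

variable {R : Type*} [CommRing R] [TopologicalSpace R]

theorem multipliable_of_X_pow_dvd_sub_one {g : ℕ → R⟦X⟧} (hg : ∀ j, X ^ (j + 1) ∣ g j - 1) :
    Multipliable g := by
  simpa using multipliable_one_add_of_tendsto_order_atTop_nhds_top R (f := fun j ↦ g j - 1) <|
    ENat.tendsto_nhds_top_iff_natCast_lt.mpr fun n ↦ eventually_atTop.mpr ⟨n, fun j hj ↦
      (Nat.cast_lt.mpr (by omega)).trans_le <|
        nat_le_order _ _ fun i hi ↦ X_pow_dvd_iff.mp (hg j) i hi⟩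

theorem X_pow_dvd_tprod_sub_prod_range [T2Space R] {g : ℕ → R⟦X⟧} (hg : Multipliable g)
    {ν K : ℕ} (h : ∀ j, K ≤ j → X ^ ν ∣ g j - 1) :
    X ^ ν ∣ ∏' j, g j - ∏ j ∈ range K, g j := by
  refine X_pow_dvd_iff.mpr fun i hi ↦ ?_
  rw [map_sub, sub_eq_zero]
  refine tendsto_nhds_unique (((continuous_coeff R i).tendsto _).comp hg.tendsto_prod_tprod_nat)
    (tendsto_const_nhds.congr' ?_)
  filter_upwards [eventually_ge_atTop K] with L hL
  have := X_pow_dvd_iff.mp (dvd_prod_range_sub_prod_range hL fun j hj _ ↦ h j hj) i hi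
  rw [map_sub, sub_eq_zero] at this
  exact this.symm

theorem tendsto_zero_of_forall_X_pow_dvd {f : ℕ → R⟦X⟧} (h : ∀ m, X ^ m ∣ f m) :
    Tendsto f atTop (𝓝 0) := by
  refine (tendsto_iff_coeff_tendsto R _ _ _).mpr fun d ↦ tendsto_const_nhds.congr' ?_
  filter_upwards [eventually_gt_atTop d] with m hm
  rw [map_zero, X_pow_dvd_iff.mp (h m) d hm]

theorem mul_tprod_eq_tprod_of_coeff_eq [T2Space R] {A : R⟦X⟧} {g g' : ℕ → R⟦X⟧}
    (hg : ∀ j, X ^ (j + 1) ∣ g j - 1) (hg' : ∀ j, X ^ (j + 1) ∣ g' j - 1)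
    (h : ∀ N, coeff N (A * ∏ j ∈ range (N + 1), g j) = coeff N (∏ j ∈ range (N + 1), g' j)) :
    A * ∏' j, g j = ∏' j, g' j := by
  ext N
  have trunc {g : ℕ → R⟦X⟧} (hg : ∀ j, X ^ (j + 1) ∣ g j - 1) :
      X ^ (N + 1) ∣ ∏' j, g j - ∏ j ∈ range (N + 1), g j :=
    X_pow_dvd_tprod_sub_prod_range (multipliable_of_X_pow_dvd_sub_one hg)
      fun j hj ↦ (pow_dvd_pow X (by omega)).trans (hg j)
  have h₁ := X_pow_dvd_iff.mp ((trunc hg).mul_left A) N (by omega)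
  have h₂ := X_pow_dvd_iff.mp (trunc hg') N (by omega)
  rw [mul_sub, map_sub, sub_eq_zero] at h₁
  rw [map_sub, sub_eq_zero] at h₂
  rw [h₁, h₂, h N]

noncomputable def euler (Z : R⟦X⟧) : R⟦X⟧ := ∏' n, (1 - Z ^ (n + 1))

variable {Z : R⟦X⟧}

theorem multipliable_euler (hZ : X ∣ Z) : Multipliable fun n ↦ 1 - Z ^ (n + 1) :=
  multipliable_of_X_pow_dvd_sub_one fun j ↦ X_pow_dvd_one_sub_pow_sub_one hZ (j + 1)

theorem tendsto_euler (hZ : X ∣ Z) {c : ℕ} (hc : c ≠ 0) :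
    Tendsto (fun K ↦ ∏ j ∈ range K, ∏ r ∈ range c, (1 - Z ^ (c * j + r + 1))) atTop
      (𝓝 (euler Z)) :=
  (multipliable_euler hZ).tendsto_prod_range_blocks hc

theorem isUnit_euler [T2Space R] (hZ : X ∣ Z) : IsUnit (euler Z) := by
  refine isUnit_of_X_dvd_sub_one ?_
  simpa [euler] using X_pow_dvd_tprod_sub_prod_range (multipliable_euler hZ) (ν := 1) (K := 0)
    fun j _ ↦ (pow_dvd_pow X (by omega)).trans (X_pow_dvd_one_sub_pow_sub_one hZ (j + 1))

theorem euler_pow_char [T2Space R] [IsTopologicalRing R] (p : ℕ) [hp : Fact p.Prime] [CharP R p]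
    (hZ : X ∣ Z) : euler (Z ^ p) = euler Z ^ p := by
  have : CharP R⟦X⟧ p := charP_of_injective_ringHom C_injective p
  refine tendsto_nhds_unique (multipliable_euler (dvd_pow hZ hp.out.ne_zero)).tendsto_prod_tprod_nat
    (((multipliable_euler hZ).tendsto_prod_tprod_nat.pow p).congr fun K ↦ ?_)
  rw [← prod_pow]
  refine prod_congr rfl fun j _ ↦ ?_
  rw [sub_pow_char, one_pow, ← pow_mul, ← pow_mul, mul_comm]

theorem tprod_numeratorFactor_mul_euler [T2Space R] [IsTopologicalRing R] (hZ : X ∣ Z) :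
    (∏' j, numeratorFactor Z j) * euler Z * euler (Z ^ 4) * euler (Z ^ 6) =
      euler (Z ^ 2) * euler (Z ^ 2) * euler (Z ^ 3) * euler (Z ^ 12) := by
  have hN := multipliable_of_X_pow_dvd_sub_one (X_pow_dvd_numeratorFactor_sub_one hZ)
  refine tendsto_nhds_unique (((hN.tendsto_prod_tprod_nat.mul
    (tendsto_euler hZ (c := 6) (by norm_num))).mul
    (tendsto_euler (dvd_pow hZ four_ne_zero) three_ne_zero)).mul
    (tendsto_euler (dvd_pow hZ (by norm_num : 6 ≠ 0)) two_ne_zero)) ?_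
  refine ((((tendsto_euler (dvd_pow hZ two_ne_zero) (c := 6) (by norm_num)).mul
    (tendsto_euler (dvd_pow hZ two_ne_zero) three_ne_zero)).mul
    (tendsto_euler (dvd_pow hZ three_ne_zero) two_ne_zero)).mul
    (multipliable_euler (dvd_pow hZ (by norm_num : 12 ≠ 0))).tendsto_prod_tprod_nat).congr
    fun K ↦ ?_
  simp only [← prod_mul_distrib]
  refine prod_congr rfl fun j _ ↦ ?_
  simp only [numeratorFactor, prod_range_succ, prod_range_zero, one_mul, ← pow_mul]
  ring

theorem euler_neg_mul_euler_mul_euler_pow_four [T2Space R] [IsTopologicalRing R] (hZ : X ∣ Z) :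
    euler (-Z) * euler Z * euler (Z ^ 4) = euler (Z ^ 2) ^ 2 * euler (Z ^ 2) := by
  refine tendsto_nhds_unique (((tendsto_euler hZ.neg_right two_ne_zero).mul
    (tendsto_euler hZ two_ne_zero)).mul (multipliable_euler (dvd_pow hZ four_ne_zero)
      ).tendsto_prod_tprod_nat) ?_
  refine (((multipliable_euler (dvd_pow hZ two_ne_zero)).tendsto_prod_tprod_nat.pow 2).mul
    (tendsto_euler (dvd_pow hZ two_ne_zero) two_ne_zero)).congr fun K ↦ ?_
  simp only [← prod_pow, ← prod_mul_distrib]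
  refine prod_congr rfl fun j _ ↦ ?_
  simp only [prod_range_succ, prod_range_zero, one_mul, neg_pow Z, pow_add, pow_mul, neg_one_sq,
    one_pow]
  ring

theorem euler_X_pow [T2Space R] (d : ℕ) (hd : d ≠ 0) :
    euler (X ^ d : R⟦X⟧) = expand d hd (euler X) := by
  have h := (multipliable_euler (dvd_refl (X : R⟦X⟧))).tendsto_prod_tprod_nat
  have h' : Tendsto (fun K ↦ expand d hd (∏ j ∈ range K, (1 - X ^ (j + 1) : R⟦X⟧))) atTop
      (𝓝 (expand d hd (euler X))) := by
    refine (tendsto_iff_coeff_tendsto R _ _ _).mpr fun n ↦ ?_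
    simp only [coeff_expand]
    split_ifs
    exacts [(tendsto_iff_coeff_tendsto R _ _ _).mp h _, tendsto_const_nhds]
  refine tendsto_nhds_unique (multipliable_euler (dvd_pow_self X hd)).tendsto_prod_tprod_nat
    (h'.congr fun K ↦ ?_)
  simp [map_prod, ← pow_mul]

end InfiniteProducts

section Gauss

variable {R : Type*} [CommRing R] [TopologicalSpace R] {Z : R⟦X⟧}

theorem multipliable_jacobi {U V : R⟦X⟧} (hU : X ∣ U) (hV : X ∣ V) :
    Multipliable fun j ↦ (1 + U * (U * V) ^ j) * (1 + V * (U * V) ^ j) := by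
  have hQ : X ∣ U * V := hU.mul_right V
  refine multipliable_of_X_pow_dvd_sub_one fun j ↦ dvd_mul_sub_one ?_ ?_ <;>
    rw [add_sub_cancel_left, pow_succ']
  exacts [mul_dvd_mul hU (pow_dvd_pow_of_dvd hQ j), mul_dvd_mul hV (pow_dvd_pow_of_dvd hQ j)]

theorem summable_jacobiTerm {U V : R⟦X⟧} (hU : X ∣ U) (hV : X ∣ V) :
    Summable (jacobiTerm U V) := by
  refine (summable_iff_summable_coeff R).mpr fun d ↦ summable_of_hasFiniteSupport <|
    (Set.finite_Icc (-d : ℤ) d).subset fun k hk ↦ ?_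
  by_contra hkd
  exact hk (X_pow_dvd_iff.mp (X_pow_natAbs_dvd_jacobiTerm hU hV k) d (by simp at hkd; omega))

/-- **Jacobi's triple product identity.** -/
theorem hasSum_jacobiTerm [T2Space R] [IsTopologicalRing R] {U V : R⟦X⟧} (hU : X ∣ U)
    (hV : X ∣ V) :
    HasSum (jacobiTerm U V)
      ((∏' j, (1 + U * (U * V) ^ j) * (1 + V * (U * V) ^ j)) * euler (U * V)) := by
  have hQ : X ∣ U * V := hU.mul_right V
  have hs := summable_jacobiTerm hU hV
  convert hs.hasSum using 1
  refine tendsto_nhds_unique ((multipliable_jacobi hU hV).tendsto_prod_tprod_nat.mul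
    (multipliable_euler hQ).tendsto_prod_tprod_nat) ?_
  have hsym : Tendsto (fun m : ℕ ↦ ∑ k ∈ Icc (-(m : ℤ)) m, jacobiTerm U V k) atTop
      (𝓝 (∑' k, jacobiTerm U V k)) := hs.hasSum.comp tendsto_Icc_neg
  -- the `m`-th truncations of the two sides differ by a multiple of `Xᵐ`
  have hdiff := tendsto_zero_of_forall_X_pow_dvd (R := R) (f := fun m : ℕ ↦
    (∏ j ∈ range m, (1 + U * (U * V) ^ j) * (1 + V * (U * V) ^ j)) * qPoch (U * V) m -
      ∑ k ∈ Icc (-(m : ℤ)) m, jacobiTerm U V k) fun m ↦ by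
    rw [prod_mul_distrib, prod_mul_prod_eq_sum_jacobiTerm, ← two_mul, ← sum_antidiagonal_eq_sum_Icc,
      sum_mul, ← sum_sub_distrib]
    refine dvd_sum fun p hp ↦ ?_
    rw [HasAntidiagonal.mem_antidiagonal] at hp
    rw [mul_right_comm, ← sub_one_mul]
    have h := mul_dvd_mul (X_pow_dvd_qBinom_mul_qPoch_sub_one hQ hp)
      (X_pow_natAbs_dvd_jacobiTerm hU hV (m - p.1))
    rw [← pow_add] at h
    exact (pow_dvd_pow X (by omega)).trans h
  simpa [qPoch] using hsym.add hdiff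

/-- Ramanujan's `ψ(Z) = ∑_{ℓ ≥ 0} Z^(ℓ(ℓ+1)/2)`, where `ℓ = 2k` for `k ≥ 0` and `ℓ = -2k - 1` for
`k < 0`. -/
noncomputable def ramanujanPsi (Z : R⟦X⟧) : R⟦X⟧ := ∑' k : ℤ, Z ^ (k * (2 * k + 1)).toNat

theorem tprod_jacobi_mul_euler_mul_euler [T2Space R] [IsTopologicalRing R] (hZ : X ∣ Z) :
    (∏' j, (1 + Z ^ 3 * (Z ^ 4) ^ j) * (1 + Z * (Z ^ 4) ^ j)) * euler Z * euler (Z ^ 4) =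
      euler (Z ^ 2) * euler (Z ^ 2) := by
  have hW := multipliable_jacobi (dvd_pow hZ three_ne_zero) hZ
  rw [show Z ^ 3 * Z = Z ^ 4 by ring] at hW
  refine tendsto_nhds_unique ((hW.tendsto_prod_tprod_nat.mul
    (tendsto_euler hZ four_ne_zero)).mul (tendsto_euler (dvd_pow hZ four_ne_zero) two_ne_zero)) ?_
  refine ((tendsto_euler (dvd_pow hZ two_ne_zero) four_ne_zero).mul
    (tendsto_euler (dvd_pow hZ two_ne_zero) two_ne_zero)).congr fun K ↦ ?_
  simp only [← prod_mul_distrib]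
  refine prod_congr rfl fun j _ ↦ ?_
  simp only [prod_range_succ, prod_range_zero, one_mul, ← pow_mul]
  ring

/-- **Gauss's identity** `ψ(Z) = ∏ₙ (1 - Z²ⁿ)² / (1 - Zⁿ)`. -/
theorem ramanujanPsi_mul_euler [T2Space R] [IsTopologicalRing R] (hZ : X ∣ Z) :
    ramanujanPsi Z * euler Z = euler (Z ^ 2) ^ 2 := by
  have h := (hasSum_jacobiTerm (dvd_pow hZ three_ne_zero) hZ).tsum_eq
  simp only [jacobiTerm_pow_three_self, show Z ^ 3 * Z = Z ^ 4 by ring] at h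
  rw [ramanujanPsi, h, sq, ← tprod_jacobi_mul_euler_mul_euler hZ]
  ring

end Gauss

section Coefficients

variable {R : Type*} [CommRing R]

theorem coeff_mul_eq_zero {f g : R⟦X⟧} {n : ℕ}
    (h : ∀ i j, i + j = n → coeff i f = 0 ∨ coeff j g = 0) : coeff n (f * g) = 0 := by
  rw [coeff_mul]
  refine sum_eq_zero fun p hp ↦ ?_
  rcases h p.1 p.2 (mem_antidiagonal.mp hp) with h | h <;> simp [h]

theorem exists_one_le_mul_sub_one_eq (k : ℤ) :
    ∃ l : ℤ, 1 ≤ l ∧ l * (l - 1) = 2 * ((k * (2 * k + 1)).toNat : ℤ) := by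
  rcases le_or_gt 0 k with hk | hk
  · refine ⟨2 * k + 1, by omega, ?_⟩
    rw [Int.toNat_of_nonneg (by positivity)]
    ring
  · refine ⟨-2 * k, by omega, ?_⟩
    rw [Int.toNat_of_nonneg (by nlinarith)]
    ring

variable [TopologicalSpace R] [T2Space R]

theorem exists_pentagonal_of_coeff_euler_X_ne_zero {i : ℕ} (h : coeff i (euler (X : R⟦X⟧)) ≠ 0) :
    ∃ k, pentagonal k = i := by
  by_contra! hk
  rw [euler, tprod_one_sub_X_pow] at h
  exact h (coeff_pentagonalSeries_eq_zero R (by simpa using hk))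

theorem exists_pentagonal_of_coeff_euler_X_pow_ne_zero {d i : ℕ} (hd : d ≠ 0)
    (h : coeff i (euler (X ^ d : R⟦X⟧)) ≠ 0) : ∃ k, d * pentagonal k = i := by
  rw [euler_X_pow d hd, coeff_expand] at h
  split_ifs at h with hdi
  · obtain ⟨j, rfl⟩ := hdi
    rw [Nat.mul_div_cancel_left _ (Nat.pos_of_ne_zero hd)] at h
    obtain ⟨k, rfl⟩ := exists_pentagonal_of_coeff_euler_X_ne_zero h
    exact ⟨k, rfl⟩
  · exact absurd rfl h

theorem coeff_ramanujanPsi_eq_zero {Z : R⟦X⟧} {i : ℕ}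
    (h : ∀ k : ℤ, coeff i (Z ^ (k * (2 * k + 1)).toNat) = 0) : coeff i (ramanujanPsi Z) = 0 := by
  by_cases hs : Summable fun k : ℤ ↦ Z ^ (k * (2 * k + 1)).toNat
  · exact ((hasSum_iff_hasSum_coeff R).mp hs.hasSum i).unique (by simp [h])
  · rw [ramanujanPsi, tsum_eq_zero_of_not_summable hs, map_zero]

theorem exists_of_coeff_ramanujanPsi_X_pow_ne_zero {d j : ℕ}
    (h : coeff j (ramanujanPsi (X ^ d : R⟦X⟧)) ≠ 0) : ∃ k : ℤ, d * (k * (2 * k + 1)).toNat = j := by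
  by_contra! hk
  exact h (coeff_ramanujanPsi_eq_zero fun k ↦ by rw [← pow_mul, coeff_X_pow, if_neg (hk k).symm])

theorem exists_of_coeff_ramanujanPsi_neg_X_ne_zero {j : ℕ}
    (h : coeff j (ramanujanPsi (-X : R⟦X⟧)) ≠ 0) : ∃ k : ℤ, (k * (2 * k + 1)).toNat = j := by
  by_contra! hk
  refine h (coeff_ramanujanPsi_eq_zero fun k ↦ ?_)
  rcases neg_one_pow_eq_or R⟦X⟧ (k * (2 * k + 1)).toNat with h | h <;>
    simp [neg_pow, h, coeff_X_pow, (hk k).symm]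

theorem coeff_euler_mul_ramanujanPsi_X_sq_eq_zero {n : ℕ}
    (h : ¬ ∃ k l : ℤ, 1 ≤ l ∧ 2 * (n : ℤ) = k * (3 * k - 1) + 2 * (l * (l - 1))) :
    coeff n (euler X * ramanujanPsi (X ^ 2) : R⟦X⟧) = 0 := by
  refine coeff_mul_eq_zero fun i j hij ↦ ?_
  by_contra! hne
  obtain ⟨k, rfl⟩ := exists_pentagonal_of_coeff_euler_X_ne_zero hne.1
  obtain ⟨k', rfl⟩ := exists_of_coeff_ramanujanPsi_X_pow_ne_zero hne.2
  obtain ⟨l, hl, hl'⟩ := exists_one_le_mul_sub_one_eq k'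
  refine h ⟨k, l, hl, ?_⟩
  rw [hl', ← two_mul_natCast_pentagonal, ← hij]
  push_cast
  ring

theorem coeff_euler_X_pow_four_mul_ramanujanPsi_neg_X_eq_zero {n : ℕ}
    (h : ¬ ∃ k l : ℤ, 1 ≤ l ∧ 2 * (n : ℤ) = l * (l - 1) + 4 * (k * (3 * k - 1))) :
    coeff n (euler (X ^ 4) * ramanujanPsi (-X) : R⟦X⟧) = 0 := by
  refine coeff_mul_eq_zero fun i j hij ↦ ?_
  by_contra! hne
  obtain ⟨k, rfl⟩ := exists_pentagonal_of_coeff_euler_X_pow_ne_zero four_ne_zero hne.1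
  obtain ⟨k', rfl⟩ := exists_of_coeff_ramanujanPsi_neg_X_ne_zero hne.2
  obtain ⟨l, hl, hl'⟩ := exists_one_le_mul_sub_one_eq k'
  refine h ⟨k, l, hl, ?_⟩
  rw [hl', ← two_mul_natCast_pentagonal, ← hij]
  push_cast
  ring

end Coefficients

section GeneratingFunction

variable {R : Type*} [CommRing R] [TopologicalSpace R] [T2Space R] {A : R⟦X⟧}

theorem mk_intCast_mul_euler_X (C : ℕ → ℤ)
    (hC : ∀ N : ℕ, coeff N ((mk fun n ↦ C n) * ∏ n ∈ range (N + 1), (1 - (X : ℤ⟦X⟧) ^ (n + 1))) =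
      coeff N (∏ n ∈ range (N + 1), numeratorFactor (X : ℤ⟦X⟧) n)) :
    (mk fun n ↦ (C n : R)) * euler X = ∏' j, numeratorFactor X j := by
  refine mul_tprod_eq_tprod_of_coeff_eq (fun j ↦ X_pow_dvd_one_sub_pow_sub_one dvd_rfl (j + 1))
    (X_pow_dvd_numeratorFactor_sub_one dvd_rfl) fun N ↦ ?_
  have h := congrArg (Int.castRingHom R) (hC N)
  rw [← coeff_map, ← coeff_map] at h
  have hmk : map (Int.castRingHom R) (mk fun n ↦ C n) = mk fun n ↦ (C n : R) := by ext; simp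
  simpa [hmk, numeratorFactor, map_prod] using h

variable [IsTopologicalRing R]

theorem mul_euler_X_sq_eq [CharP R 3] (hA : A * euler X = ∏' j, numeratorFactor X j) :
    A * euler (X ^ 2) = euler X * euler (X ^ 4) ^ 2 := by
  have hX : (X : R⟦X⟧) ∣ X := dvd_rfl
  have h := tprod_numeratorFactor_mul_euler hX
  have h₃ := euler_pow_char 3 hX
  have h₆ := euler_pow_char 3 (dvd_pow_self (X : R⟦X⟧) two_ne_zero)
  have h₁₂ := euler_pow_char 3 (dvd_pow_self (X : R⟦X⟧) four_ne_zero)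
  rw [← pow_mul] at h₆ h₁₂
  rw [← hA, h₃, h₆, h₁₂] at h
  have hu : IsUnit (euler X ^ 2 * euler (X ^ 4) * euler (X ^ 2) ^ 2 : R⟦X⟧) :=
    ((isUnit_euler hX).pow 2 |>.mul (isUnit_euler (dvd_pow_self X four_ne_zero))).mul
      ((isUnit_euler (dvd_pow_self X two_ne_zero)).pow 2)
  refine sub_eq_zero.mp (hu.mul_left_eq_zero.mp ?_)
  linear_combination h

theorem eq_euler_mul_ramanujanPsi_X_sq (h : A * euler (X ^ 2) = euler X * euler (X ^ 4) ^ 2) :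
    A = euler X * ramanujanPsi (X ^ 2) := by
  have hg := ramanujanPsi_mul_euler (dvd_pow_self (X : R⟦X⟧) two_ne_zero)
  rw [← pow_mul] at hg
  refine sub_eq_zero.mp ((isUnit_euler (dvd_pow_self X two_ne_zero)).mul_left_eq_zero.mp ?_)
  linear_combination h - euler X * hg

theorem eq_euler_X_pow_four_mul_ramanujanPsi_neg_X
    (h : A * euler (X ^ 2) = euler X * euler (X ^ 4) ^ 2) :
    A = euler (X ^ 4) * ramanujanPsi (-X) := by
  have hX : (X : R⟦X⟧) ∣ X := dvd_rfl
  have hg := ramanujanPsi_mul_euler hX.neg_right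
  have hE := euler_neg_mul_euler_mul_euler_pow_four hX
  rw [neg_sq] at hg
  refine sub_eq_zero.mp
    (((isUnit_euler (dvd_pow_self X two_ne_zero)).pow 3).mul_left_eq_zero.mp ?_)
  linear_combination euler (X ^ 2) ^ 2 * h - euler X * euler (X ^ 4) ^ 2 * hg +
    euler (X ^ 4) * ramanujanPsi (-X) * hE

end GeneratingFunction

theorem C61_mod_three_general (C : ℕ → ℤ)
    (hC : ∀ N : ℕ, PowerSeries.coeff N
      ((PowerSeries.mk fun n => C n) *
        ∏ n ∈ Finset.range (N + 1), (1 - (PowerSeries.X : PowerSeries ℤ) ^ (n + 1))) =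
      PowerSeries.coeff N
      (∏ n ∈ Finset.range (N + 1),
        ((1 - (PowerSeries.X : PowerSeries ℤ) ^ (6 * (n + 1))) *
          (1 + PowerSeries.X ^ (6 * n + 1)) * (1 + PowerSeries.X ^ (6 * n + 5)))))
    (n : ℕ)
    (h : (¬ ∃ (k l : ℤ), 1 ≤ l ∧ 2 * (n : ℤ) = k * (3 * k - 1) + 2 * (l * (l - 1))) ∨
         (¬ ∃ (k l : ℤ), 1 ≤ l ∧ 2 * (n : ℤ) = l * (l - 1) + 4 * (k * (3 * k - 1)))) :
    C n ≡ 0 [ZMOD 3] := by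
  set A : (ZMod 3)⟦X⟧ := mk fun i ↦ (C i : ZMod 3)
  have hA : A * euler (X ^ 2) = euler X * euler (X ^ 4) ^ 2 :=
    mul_euler_X_sq_eq (mk_intCast_mul_euler_X C hC)
  suffices hn : coeff n A = 0 by
    simpa [A, ZMod.intCast_zmod_eq_zero_iff_dvd, Int.modEq_zero_iff_dvd] using hn
  rcases h with h | h
  · rw [eq_euler_mul_ramanujanPsi_X_sq hA]
    exact coeff_euler_mul_ramanujanPsi_X_sq_eq_zero h
  · rw [eq_euler_X_pow_four_mul_ramanujanPsi_neg_X hA]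
    exact coeff_euler_X_pow_four_mul_ramanujanPsi_neg_X_eq_zero h

/-- For `n ≥ 1`: if `n` is not a generalized pentagonal number plus twice a triangular
number, or `n` is not a triangular number plus four times a generalized pentagonal
number, then `C̄₆₁(n) ≡ 0 (mod 3)` (here `n = k(3k-1)/2 + ℓ(ℓ-1)` is stated as
`2n = k(3k-1) + 2ℓ(ℓ-1)`, and `n = ℓ(ℓ-1)/2 + 4·k(3k-1)/2` as
`2n = ℓ(ℓ-1) + 4k(3k-1)`, with `ℓ ≥ 1`). -/
theorem C61_mod_three (C : ℕ → ℤ)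
    (hC : ∀ N : ℕ, PowerSeries.coeff N
      ((PowerSeries.mk fun n => C n) *
        ∏ n ∈ Finset.range (N + 1), (1 - (PowerSeries.X : PowerSeries ℤ) ^ (n + 1))) =
      PowerSeries.coeff N
      (∏ n ∈ Finset.range (N + 1),
        ((1 - (PowerSeries.X : PowerSeries ℤ) ^ (6 * (n + 1))) *
          (1 + PowerSeries.X ^ (6 * n + 1)) * (1 + PowerSeries.X ^ (6 * n + 5)))))
    (n : ℕ) (hn : 1 ≤ n)
    (h : (¬ ∃ (k l : ℤ), 1 ≤ l ∧ 2 * (n : ℤ) = k * (3 * k - 1) + 2 * (l * (l - 1))) ∨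
         (¬ ∃ (k l : ℤ), 1 ≤ l ∧ 2 * (n : ℤ) = l * (l - 1) + 4 * (k * (3 * k - 1)))) :
    C n ≡ 0 [ZMOD 3] :=
  C61_mod_three_general C hC n h
end

section
/- Let p ≥ 5 be a prime and let r be an integer with 1 ≤ r ≤ p−1 such that 24r+1 is a quadratic nonresidue modulo p (i.e., there is no integer x with x^2 ≡ 24r+1 (mod p)). Then for all integers m ≥ 0, C̄_{6,2}(pm + r) ≡ 0 (mod 2). -/
/-!
Modulo 2 we have `1 + q^k = 1 - q^k` and `(1 - q^k)^2 = 1 - q^(2k)`, so the generating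
function becomes `∏ (1 - q^(2n)) / ∏ (1 - q^n) = ∏ (1 - q^n)`, which by Euler's pentagonal
number theorem is `∑ ± q^(k(3k-1)/2)`. Hence `C̄₆,₂(n)` is odd only when `n` is a generalized
pentagonal number, i.e. `24n + 1 = (6k - 1)^2`; for `n ≡ r (mod p)` this would make `24r + 1`
a square mod `p`.
-/

open PowerSeries Finset

namespace PowerSeries

variable {R : Type*}

instance instCharP [Semiring R] (p : ℕ) [CharP R p] : CharP R⟦X⟧ p :=
  charP_of_injective_ringHom C_injective p

variable [CommRing R]

theorem coeff_mul_congr_right {f g : R⟦X⟧} {N : ℕ} (h : ∀ j ≤ N, coeff j f = coeff j g)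
    (u : R⟦X⟧) : coeff N (u * f) = coeff N (u * g) := by
  rw [coeff_mul, coeff_mul]
  refine sum_congr rfl fun x hx => ?_
  rw [h x.2 (HasAntidiagonal.antidiagonal.snd_le hx)]

theorem coeff_prod_range_one_sub_X_pow_of_le {n M : ℕ} (h : n ≤ M) :
    coeff n (∏ k ∈ range M, (1 - X ^ (k + 1) : R⟦X⟧)) =
      coeff n (∏ k ∈ range n, (1 - X ^ (k + 1) : R⟦X⟧)) := by
  induction M, h using Nat.le_induction with
  | base => rfl
  | succ M hM ih =>
    rw [prod_range_succ, mul_sub, mul_one, map_sub, coeff_mul_X_pow', if_neg (by omega),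
      sub_zero, ih]

variable (R) in
theorem coeff_prod_range_one_sub_X_pow {n M : ℕ} (h : n ≤ M) :
    coeff n (∏ k ∈ range M, (1 - X ^ (k + 1) : R⟦X⟧)) = coeff n (pentagonalSeries R) := by
  obtain ⟨s, hs⟩ := Filter.eventually_atTop.1 (coeff_prod_one_sub_X_pow_eventually_eq R n)
  obtain ⟨L, hL⟩ := s.exists_nat_subset_range
  rw [← hs _ (hL.trans (range_subset_range.2 (le_max_left L M))),
    coeff_prod_range_one_sub_X_pow_of_le h,
    coeff_prod_range_one_sub_X_pow_of_le (h.trans (le_max_right L M))]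

theorem isUnit_pentagonalSeries : IsUnit (pentagonalSeries R) := by
  have h : constantCoeff (pentagonalSeries R) = 1 := by
    simpa [pentagonal] using coeff_pentagonalSeries_pentagonal R 0
  exact isUnit_iff_constantCoeff.2 (h ▸ isUnit_one)

section CharTwo

variable [CharP R 2]

theorem overpartitionFactor_eq_sq (n : ℕ) :
    ((1 - X ^ (6 * (n + 1))) * (1 + X ^ (6 * n + 2)) * (1 + X ^ (6 * n + 4)) : R⟦X⟧) =
      ((1 - X ^ (3 * n + 1)) * (1 - X ^ (3 * n + 2)) * (1 - X ^ (3 * n + 3))) ^ 2 := by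
  simp only [CharTwo.sub_eq_add, mul_pow, CharTwo.add_sq, one_pow, ← pow_mul]
  ring_nf

theorem prod_range_overpartitionFactor_eq_sq (N : ℕ) :
    ∏ n ∈ range N,
        ((1 - X ^ (6 * (n + 1))) * (1 + X ^ (6 * n + 2)) * (1 + X ^ (6 * n + 4)) : R⟦X⟧) =
      (∏ k ∈ range (3 * N), (1 - X ^ (k + 1))) ^ 2 := by
  induction N with
  | zero => simp
  | succ N ih =>
    rw [prod_range_succ, ih, overpartitionFactor_eq_sq,
      show 3 * (N + 1) = 3 * N + 1 + 1 + 1 by ring, prod_range_succ, prod_range_succ,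
      prod_range_succ, ← mul_pow]
    ring_nf

theorem eq_pentagonalSeries_of_coeff_mul_eq {c : R⟦X⟧}
    (hc : ∀ N : ℕ, coeff N (c * ∏ n ∈ range (N + 1), (1 - X ^ (n + 1))) =
      coeff N (∏ n ∈ range (N + 1),
        ((1 - X ^ (6 * (n + 1))) * (1 + X ^ (6 * n + 2)) * (1 + X ^ (6 * n + 4))))) :
    c = pentagonalSeries R := by
  set P := pentagonalSeries R
  suffices c * P = P * P from isUnit_pentagonalSeries.mul_right_cancel this
  ext N
  set Q := ∏ k ∈ range (3 * (N + 1)), (1 - X ^ (k + 1) : R⟦X⟧)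
  have hQ : ∀ j ≤ N, coeff j Q = coeff j P := fun j hj =>
    coeff_prod_range_one_sub_X_pow R (by omega)
  calc coeff N (c * P)
      = coeff N (c * ∏ n ∈ range (N + 1), (1 - X ^ (n + 1))) :=
        coeff_mul_congr_right (fun j hj => (coeff_prod_range_one_sub_X_pow R (by omega)).symm) c
    _ = coeff N (Q * Q) := by rw [hc, prod_range_overpartitionFactor_eq_sq, sq]
    _ = coeff N (P * Q) := by rw [coeff_mul_congr_right hQ, mul_comm]
    _ = coeff N (P * P) := coeff_mul_congr_right hQ P

end CharTwo

end PowerSeries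

theorem sq_six_mul_sub_one_eq (k : ℤ) : (6 * k - 1) ^ 2 = 24 * (pentagonal k : ℤ) + 1 := by
  linear_combination (-12) * two_mul_natCast_pentagonal k

theorem notMem_range_pentagonal_of_modEq {p n : ℕ} {a : ℤ} (hn : n ≡ a [ZMOD p])
    (ha : ¬ ∃ x : ℤ, x ^ 2 ≡ 24 * a + 1 [ZMOD p]) : n ∉ Set.range pentagonal := by
  rintro ⟨k, rfl⟩
  exact ha ⟨6 * k - 1, sq_six_mul_sub_one_eq k ▸ (hn.mul_left 24).add_right 1⟩

theorem C62_nonresidue_mod_two_general (C : ℕ → ℤ)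
    (hC : ∀ N : ℕ, PowerSeries.coeff (R := ℤ) N
      ((PowerSeries.mk fun n => C n) *
        ∏ n ∈ Finset.range (N + 1), (1 - (PowerSeries.X : PowerSeries ℤ) ^ (n + 1))) =
      PowerSeries.coeff (R := ℤ) N
      (∏ n ∈ Finset.range (N + 1),
        ((1 - (PowerSeries.X : PowerSeries ℤ) ^ (6 * (n + 1))) *
          (1 + PowerSeries.X ^ (6 * n + 2)) * (1 + PowerSeries.X ^ (6 * n + 4)))))
    (p : ℕ) (r : ℕ)
    (hnr : ¬ ∃ x : ℤ, x ^ 2 ≡ 24 * (r : ℤ) + 1 [ZMOD p])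
    (m : ℕ) :
    C (p * m + r) ≡ 0 [ZMOD 2] := by
  have hmod2 : map (Int.castRingHom (ZMod 2)) (mk fun n => C n) = pentagonalSeries (ZMod 2) :=
    eq_pentagonalSeries_of_coeff_mul_eq fun N => by
      simpa only [← coeff_map, map_mul, map_prod, map_sub, map_add, map_one, map_pow, map_X]
        using congrArg (Int.castRingHom (ZMod 2)) (hC N)
  have hn : p * m + r ∉ Set.range pentagonal :=
    notMem_range_pentagonal_of_modEq (by simp [Int.ModEq]) hnr
  have hCn := congrArg (coeff (p * m + r)) hmod2
  rw [coeff_map, coeff_mk, coeff_pentagonalSeries_eq_zero _ hn] at hCn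
  exact (ZMod.intCast_eq_intCast_iff _ 0 2).1 (by simpa using hCn)

/-- If `p ≥ 5` is prime, `1 ≤ r ≤ p - 1`, and `24r + 1` is a quadratic nonresidue mod
`p`, then `C̄₆₂(pm + r) ≡ 0 (mod 2)` for all `m ≥ 0`. -/
theorem C62_nonresidue_mod_two (C : ℕ → ℤ)
    (hC : ∀ N : ℕ, PowerSeries.coeff (R := ℤ) N
      ((PowerSeries.mk fun n => C n) *
        ∏ n ∈ Finset.range (N + 1), (1 - (PowerSeries.X : PowerSeries ℤ) ^ (n + 1))) =
      PowerSeries.coeff (R := ℤ) N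
      (∏ n ∈ Finset.range (N + 1),
        ((1 - (PowerSeries.X : PowerSeries ℤ) ^ (6 * (n + 1))) *
          (1 + PowerSeries.X ^ (6 * n + 2)) * (1 + PowerSeries.X ^ (6 * n + 4)))))
    (p : ℕ) (hp : p.Prime) (hp5 : 5 ≤ p) (r : ℕ) (hr1 : 1 ≤ r) (hr2 : r ≤ p - 1)
    (hnr : ¬ ∃ x : ℤ, x ^ 2 ≡ 24 * (r : ℤ) + 1 [ZMOD p])
    (m : ℕ) :
    C (p * m + r) ≡ 0 [ZMOD 2] :=
  C62_nonresidue_mod_two_general C hC p r hnr m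
end
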